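/- arXiv:2104.10084 — 8 statements merged into one kernel-verified Lean document; each statement's English description precedes it below -/
import Mathlib

section
/- Let R ∈ ℚ[[g]] be the unique formal power series with constant coefficient 1 satisfying R = 1 + 3gR². The series S = R·(1 − 6gR) has constant coefficient 1, hence is invertible in ℚ[[g]], and the coefficient of g^n in S^{−1} is asymptotically equivalent to 12^n/(2√(π n)) as n → ∞. (S^{−1} equals the specialization at t = 1 of d(ln R)/dt, the generating function of triply pointed quadrangulations plus t^{−1}.) -/
open PowerSeries Filter Finset Real Stirling Topology

/-! The coefficients of `R = 1 + aXR²` are `aⁿ Cat n`. With `D = 1 - 2aXR` one has `D² = 1 - 4aX`,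
and `(1 - 4aX) ∑ C(2n, n) aⁿ Xⁿ = D` coefficientwise by `C(2n+2, n+1) + 2 Cat n = 4 C(2n, n)`;
so `D⁻¹ = ∑ C(2n, n) aⁿ Xⁿ`. Since `R (1 + D) = 2`, `(R D)⁻¹ = (1 + D⁻¹) / 2`, whose `n`-th
coefficient for `a = 3`, `n ≥ 1`, is `3ⁿ C(2n, n) / 2`, and Stirling's formula gives
`C(2n, n) ~ 4ⁿ / √(π n)`. -/

theorem Nat.centralBinom_succ_add_two_mul_catalan (n : ℕ) :
    (n + 1).centralBinom + 2 * catalan n = 4 * n.centralBinom := by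
  refine Nat.eq_of_mul_eq_mul_left (by omega : 0 < n + 1) ?_
  linear_combination Nat.succ_mul_centralBinom_succ n + 2 * succ_mul_catalan_eq_centralBinom n

noncomputable def centralBinomSeries {K : Type*} [CommRing K] (a : K) : K⟦X⟧ :=
  mk fun n => a ^ n * n.centralBinom

section

variable {K : Type*} [CommRing K] {a : K} {R : K⟦X⟧}

theorem constantCoeff_eq_one_of_eq_one_add (hR : R = 1 + C a * X * R ^ 2) :
    constantCoeff R = 1 := by
  rw [hR]; simp

theorem coeff_eq_pow_mul_catalan (hR : R = 1 + C a * X * R ^ 2) (n : ℕ) :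
    coeff n R = a ^ n * catalan n := by
  induction n using Nat.strong_induction_on with
  | _ n ih =>
    rcases n with _ | n
    · simp [coeff_zero_eq_constantCoeff, constantCoeff_eq_one_of_eq_one_add hR]
    · have hterm : ∀ ij ∈ antidiagonal n,
          coeff ij.1 R * coeff ij.2 R = a ^ n * (catalan ij.1 * catalan ij.2 : ℕ) := by
        rintro ⟨i, j⟩ hij
        rw [HasAntidiagonal.mem_antidiagonal] at hij
        rw [ih i (by omega), ih j (by omega), ← hij, pow_add]
        push_cast; ring
      rw [hR, show 1 + C a * X * R ^ 2 = 1 + X * (C a * (R * R)) by ring, map_add, coeff_one,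
        coeff_succ_X_mul, coeff_C_mul, coeff_mul, sum_congr rfl hterm, ← mul_sum, ← Nat.cast_sum,
        ← catalan_succ', if_neg n.succ_ne_zero, zero_add, pow_succ']
      ring

theorem sq_one_sub_two_mul_X_mul (hR : R = 1 + C a * X * R ^ 2) :
    (1 - 2 * C a * X * R) ^ 2 = 1 - 4 * C a * X := by
  linear_combination (-4 * C a * X) * hR

theorem one_sub_four_mul_X_mul_centralBinomSeries (hR : R = 1 + C a * X * R ^ 2) :
    (1 - 4 * C a * X) * centralBinomSeries a = 1 - 2 * C a * X * R := by
  ext (_ | n)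
  · simp [centralBinomSeries]
  · have h := congrArg (Nat.cast (R := K)) (Nat.centralBinom_succ_add_two_mul_catalan n)
    push_cast at h
    rw [show (1 - 4 * C a * X) * centralBinomSeries a
        = centralBinomSeries a - X * (C (4 * a) * centralBinomSeries a) by
          rw [map_mul, map_ofNat C 4]; ring,
      show 1 - 2 * C a * X * R = 1 - X * (C (2 * a) * R) by rw [map_mul, map_ofNat C 2]; ring]
    simp only [map_sub, coeff_succ_X_mul, coeff_C_mul, coeff_one, centralBinomSeries, coeff_mk,
      coeff_eq_pow_mul_catalan hR, if_neg n.succ_ne_zero]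
    linear_combination (a ^ (n + 1)) * h

theorem one_sub_two_mul_X_mul_mul_centralBinomSeries (hR : R = 1 + C a * X * R ^ 2) :
    (1 - 2 * C a * X * R) * centralBinomSeries a = 1 := by
  set D := 1 - 2 * C a * X * R
  have hD : IsUnit D := by
    rw [isUnit_iff_constantCoeff]; simp [D]
  refine hD.mul_left_cancel ?_
  calc D * (D * centralBinomSeries a) = (1 - 4 * C a * X) * centralBinomSeries a := by
        rw [← sq_one_sub_two_mul_X_mul hR]; ring
    _ = D * 1 := by rw [one_sub_four_mul_X_mul_centralBinomSeries hR, mul_one]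

theorem mul_one_sub_two_mul_X_mul_mul_one_add_centralBinomSeries
    (hR : R = 1 + C a * X * R ^ 2) :
    R * (1 - 2 * C a * X * R) * (1 + centralBinomSeries a) = 2 := by
  linear_combination R * one_sub_two_mul_X_mul_mul_centralBinomSeries hR + 2 * hR

end

theorem centralBinom_mul_sqrt_div_four_pow {n : ℕ} (hn : n ≠ 0) :
    n.centralBinom * √n / 4 ^ n = stirlingSeq (2 * n) / stirlingSeq n ^ 2 := by
  have hn' : (0 : ℝ) < n := by positivity
  have hfac : ((2 * n).factorial : ℝ) = n.centralBinom * n.factorial ^ 2 := by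
    rw [Nat.centralBinom_eq_two_mul_choose, Nat.cast_choose ℝ (by omega : n ≤ 2 * n),
      show 2 * n - n = n by omega]
    field_simp
  have hsqrt : √(2 * (2 * n : ℕ)) = 2 * √n := by
    push_cast
    rw [show (2 : ℝ) * (2 * n) = 2 ^ 2 * n by ring, sqrt_mul (by positivity), sqrt_sq (by norm_num)]
  have hpow : ((2 * n : ℕ) / rexp 1 : ℝ) ^ (2 * n) = 4 ^ n * ((n / rexp 1) ^ n) ^ 2 := by
    push_cast
    rw [mul_div_assoc, mul_pow, pow_mul, pow_mul' (_ / _)]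
    norm_num
  have h2 : √(2 * n : ℝ) ^ 2 = 2 * n := sq_sqrt (by positivity)
  have hs : √(n : ℝ) ^ 2 = n := sq_sqrt hn'.le
  simp only [stirlingSeq]
  rw [hsqrt, hpow, hfac]
  field_simp
  linear_combination (n.centralBinom : ℝ) * (2 * hs - h2)

theorem tendsto_centralBinom_mul_sqrt_div_four_pow :
    Tendsto (fun n : ℕ => n.centralBinom * √(π * n) / 4 ^ n) atTop (𝓝 1) := by
  have hpi : √π ≠ 0 := (sqrt_pos.2 pi_pos).ne'
  have hlim : Tendsto (fun n : ℕ => stirlingSeq (2 * n) / stirlingSeq n ^ 2 * √π) atTop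
      (𝓝 (√π / √π ^ 2 * √π)) :=
    ((tendsto_stirlingSeq_sqrt_pi.comp (tendsto_id.const_mul_atTop' two_pos)).div
      (tendsto_stirlingSeq_sqrt_pi.pow 2) (pow_ne_zero 2 hpi)).mul_const _
  rw [show √π / √π ^ 2 * √π = 1 by field_simp] at hlim
  refine hlim.congr' ?_
  filter_upwards [eventually_ne_atTop 0] with n hn
  rw [← centralBinom_mul_sqrt_div_four_pow hn, sqrt_mul pi_pos.le]
  ring

theorem coeff_inv_S_asymptotics_general (R : PowerSeries ℚ)
    (hR : R = 1 + 3 * X * R ^ 2) :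
    constantCoeff (R * (1 - 6 * X * R)) = 1 ∧
    IsUnit (R * (1 - 6 * X * R)) ∧
    Tendsto
      (fun n : ℕ =>
        ((PowerSeries.coeff n (R * (1 - 6 * X * R))⁻¹ : ℚ) : ℝ) /
          (12 ^ n / (2 * Real.sqrt (Real.pi * (n : ℝ)))))
      atTop (nhds 1) := by
  have hR' : R = 1 + C 3 * X * R ^ 2 := by rwa [map_ofNat C 3]
  have hS : R * (1 - 6 * X * R) * (1 + centralBinomSeries 3) = 2 := by
    simpa [map_ofNat C 3, ← mul_assoc, show (2 : ℚ⟦X⟧) * 3 = 6 by norm_num] using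
      mul_one_sub_two_mul_X_mul_mul_one_add_centralBinomSeries hR'
  have hC : constantCoeff (R * (1 - 6 * X * R)) = 1 := by
    simp [constantCoeff_eq_one_of_eq_one_add hR']
  have hinv : (R * (1 - 6 * X * R))⁻¹ = C (1 / 2) * (1 + centralBinomSeries 3) := by
    rw [inv_eq_iff_mul_eq_one (by simp [hC]), mul_comm, mul_left_comm, hS, ← map_ofNat C 2,
      ← map_mul]
    norm_num
  refine ⟨hC, isUnit_iff_constantCoeff.2 (by simp [hC]), ?_⟩
  refine tendsto_centralBinom_mul_sqrt_div_four_pow.congr' ?_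
  filter_upwards [eventually_ne_atTop 0] with n hn
  have hcoeff : coeff n (R * (1 - 6 * X * R))⁻¹ = (3 : ℚ) ^ n * n.centralBinom / 2 := by
    simp only [hinv, centralBinomSeries, coeff_C_mul, map_add, coeff_one, hn, if_false, coeff_mk,
      zero_add]
    ring
  rw [hcoeff, show (12 : ℝ) ^ n = 3 ^ n * 4 ^ n by rw [← mul_pow]; norm_num]
  push_cast
  field_simp

/-- For the power series `R ∈ ℚ[[g]]` with constant coefficient `1` satisfying
`R = 1 + 3 g R²`, the series `S = R (1 − 6 g R)` has constant coefficient `1` (hence is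
invertible), and the coefficient of `gⁿ` in `S⁻¹` is asymptotically equivalent to
`12ⁿ / (2 √(π n))` as `n → ∞`. -/
theorem coeff_inv_S_asymptotics (R : PowerSeries ℚ) (h0 : constantCoeff R = 1)
    (hR : R = 1 + 3 * X * R ^ 2) :
    constantCoeff (R * (1 - 6 * X * R)) = 1 ∧
    IsUnit (R * (1 - 6 * X * R)) ∧
    Tendsto
      (fun n : ℕ =>
        ((PowerSeries.coeff n (R * (1 - 6 * X * R))⁻¹ : ℚ) : ℝ) /
          (12 ^ n / (2 * Real.sqrt (Real.pi * (n : ℝ)))))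
      atTop (nhds 1) :=
  coeff_inv_S_asymptotics_general R hR
end

section
/- For all positive integers L₁ and L₂, one has Σ_{l=1}^{min(L₁,L₂)} 2l · binom(2L₁, L₁−l) · binom(2L₂, L₂−l) = α(2L₁)·α(2L₂)/(L₁+L₂), where α(2L) = (2L)!/(L!·(L−1)!). (This is the hypergeometric identity by which the decomposition of annular maps along the two extremal minimal separating cycles recovers the formula G_{L₁,L₂} = α(2L₁)α(2L₂)R^{L₁+L₂}/(L₁+L₂), in the bipartite case.) -/
/-!
Put `g n = (a - n) (b - n) C(2a, a - n) C(2b, b - n)` (`annularPotential`).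
From `C(2a, a - n) (a - n) = C(2a, a - n - 1) (a + n + 1)` and
`(a + n + 1)(b + n + 1) - (a - n - 1)(b - n - 1) = 2 (n + 1)(a + b)`,
`g n - g (n + 1)` is `a + b` times the `(n + 1)`-st summand, so the sum telescopes to
`g 0 / (a + b) = a b C(2a, a) C(2b, b) / (a + b)`, and `α(2L) = L C(2L, L)`.
-/

open Finset Nat

theorem choose_two_mul_sub_mul_sub {a k : ℕ} (h : k < a) :
    (2 * a).choose (a - k) * (a - k) = (2 * a).choose (a - (k + 1)) * (a + k + 1) := by
  have hsucc : a - (k + 1) + 1 = a - k := by omega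
  have hcompl : 2 * a - (a - (k + 1)) = a + k + 1 := by omega
  simpa only [hsucc, hcompl] using Nat.choose_succ_right_eq (2 * a) (a - (k + 1))

section Telescoping

variable (a b : ℕ)

def annularPotential (n : ℕ) : ℕ :=
  (a - n) * (b - n) * (2 * a).choose (a - n) * (2 * b).choose (b - n)

theorem annularPotential_eq_succ_add {n : ℕ} (ha : n < a) (hb : n < b) :
    annularPotential a b n = annularPotential a b (n + 1)
      + (a + b) * (2 * (n + 1) * (2 * a).choose (a - (n + 1)) * (2 * b).choose (b - (n + 1))) := by
  have hweights : (a + n + 1) * (b + n + 1)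
      = (a - (n + 1)) * (b - (n + 1)) + (a + b) * (2 * (n + 1)) := by
    obtain ⟨p, rfl⟩ := Nat.exists_eq_add_of_lt ha
    obtain ⟨q, rfl⟩ := Nat.exists_eq_add_of_lt hb
    rw [show n + p + 1 - (n + 1) = p by omega, show n + q + 1 - (n + 1) = q by omega]
    ring
  unfold annularPotential
  calc (a - n) * (b - n) * (2 * a).choose (a - n) * (2 * b).choose (b - n)
      = ((2 * a).choose (a - n) * (a - n)) * ((2 * b).choose (b - n) * (b - n)) := by ring
    _ = (2 * a).choose (a - (n + 1)) * (2 * b).choose (b - (n + 1))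
          * ((a + n + 1) * (b + n + 1)) := by
        rw [choose_two_mul_sub_mul_sub ha, choose_two_mul_sub_mul_sub hb]; ring
    _ = _ := by rw [hweights]; ring

theorem add_mul_sum_add_annularPotential {n : ℕ} (ha : n ≤ a) (hb : n ≤ b) :
    (a + b) * ∑ l ∈ Icc 1 n, 2 * l * (2 * a).choose (a - l) * (2 * b).choose (b - l)
      + annularPotential a b n = a * b * a.centralBinom * b.centralBinom := by
  induction n with
  | zero => simp [annularPotential, centralBinom_eq_two_mul_choose, mul_assoc]
  | succ n ih =>
    rw [sum_Icc_succ_top (Nat.le_add_left 1 n),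
      ← ih (Nat.le_of_succ_le ha) (Nat.le_of_succ_le hb),
      annularPotential_eq_succ_add a b (n := n) ha hb]
    ring

theorem add_mul_sum_choose_mul_choose :
    (a + b) * ∑ l ∈ Icc 1 (min a b), 2 * l * (2 * a).choose (a - l) * (2 * b).choose (b - l)
      = a * b * a.centralBinom * b.centralBinom := by
  have hvanish : annularPotential a b (min a b) = 0 := by
    rcases le_total a b with h | h <;> simp [annularPotential, h]
  simpa [hvanish] using add_mul_sum_add_annularPotential a b (min_le_left a b) (min_le_right a b)

end Telescoping

theorem factorial_two_mul_div_eq_mul_centralBinom {L : ℕ} (hL : 1 ≤ L) :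
    ((2 * L)! : ℚ) / (L ! * (L - 1)!) = L * L.centralBinom := by
  obtain ⟨m, rfl⟩ := Nat.exists_eq_add_of_le' hL
  have h := Nat.add_choose_mul_factorial_mul_factorial (m + 1) (m + 1)
  rw [← two_mul, ← centralBinom_eq_two_mul_choose] at h
  rw [← h, Nat.add_sub_cancel, factorial_succ]
  push_cast
  field_simp

/-- For all positive integers `L₁, L₂`,
`Σ_{l=1}^{min(L₁,L₂)} 2l · C(2L₁, L₁−l) · C(2L₂, L₂−l) = α(2L₁) α(2L₂) / (L₁+L₂)`,
where `α(2L) = (2L)! / (L! (L−1)!)`. -/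
theorem annular_hypergeometric_identity_bipartite (L₁ L₂ : ℕ) (h₁ : 1 ≤ L₁) (h₂ : 1 ≤ L₂) :
    (∑ l ∈ Finset.Icc 1 (min L₁ L₂),
        (2 * l : ℚ) * (Nat.choose (2 * L₁) (L₁ - l) : ℚ) * (Nat.choose (2 * L₂) (L₂ - l) : ℚ))
      = ((Nat.factorial (2 * L₁) : ℚ) / ((Nat.factorial L₁ : ℚ) * (Nat.factorial (L₁ - 1) : ℚ)))
        * ((Nat.factorial (2 * L₂) : ℚ) / ((Nat.factorial L₂ : ℚ) * (Nat.factorial (L₂ - 1) : ℚ)))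
        / ((L₁ : ℚ) + (L₂ : ℚ)) := by
  have hsum := congrArg (Nat.cast : ℕ → ℚ) (add_mul_sum_choose_mul_choose L₁ L₂)
  push_cast at hsum
  have hpos : (L₁ : ℚ) + L₂ ≠ 0 := by positivity
  rw [factorial_two_mul_div_eq_mul_centralBinom h₁, factorial_two_mul_div_eq_mul_centralBinom h₂,
    eq_div_iff hpos]
  linear_combination hsum
end

section
/- For all integers a, b ≥ 0, one has Σ_{j=0}^{min(a,b)} (2j+1) · binom(2a+1, a−j) · binom(2b+1, b−j) = α(2a+1)·α(2b+1)/(a+b+1), where α(2m+1) = (2m+1)!/(m!·m!). (This is the hypergeometric identity by which the decomposition of annular maps along the two extremal minimal separating cycles recovers the formula G_{L₁,L₂} = α(2L₁)α(2L₂)R^{L₁+L₂}/(L₁+L₂), in the quasi-bipartite case L₁ = a+1/2, L₂ = b+1/2.) -/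
/-!
The sum telescopes. With `T m j = (m + 1 - j) * C(2m+1, m+1-j)` (`tailWeight`), Pascal's ratio
`(m - j + 1) C(2m+1, m-j+1) = (m + 1 + j) C(2m+1, m-j)` and the polynomial identity
`(a+1+j)(b+1+j) - (a-j)(b-j) = (a+b+1)(2j+1)` show that `(a+b+1)` times the `j`-th summand
is `T a j * T b j - T a (j+1) * T b (j+1)`. Summing, `(a+b+1)` times the whole sum is
`T a 0 * T b 0`, and `T m 0 = (m+1) C(2m+1, m+1) = (2m+1)!/(m!)²`.
-/

open Finset Nat

theorem Finset.add_sum_range_eq_of_forall_succ_add_eq {M : Type*} [AddCommMonoid M]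
    {f g : ℕ → M} {n : ℕ} (h : ∀ i < n, f (i + 1) + g i = f i) :
    f n + ∑ i ∈ range n, g i = f 0 := by
  induction n with
  | zero => simp
  | succ n ih =>
    rw [sum_range_succ, ← add_assoc, add_right_comm, h n n.lt_succ_self,
      ih fun i hi => h i (hi.trans n.lt_succ_self)]

def tailWeight (m j : ℕ) : ℕ := (m + 1 - j) * (2 * m + 1).choose (m + 1 - j)

lemma tailWeight_eq (m : ℕ) {j : ℕ} (hj : j ≤ m) :
    tailWeight m j = (m + 1 + j) * (2 * m + 1).choose (m - j) := by
  have pascal := choose_succ_right_eq (2 * m + 1) (m - j)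
  rw [show 2 * m + 1 - (m - j) = m + 1 + j by omega] at pascal
  rw [tailWeight, show m + 1 - j = m - j + 1 by omega, mul_comm, pascal, mul_comm]

lemma tailWeight_succ (m j : ℕ) :
    tailWeight m (j + 1) = (m - j) * (2 * m + 1).choose (m - j) := by
  rw [tailWeight, Nat.add_sub_add_right]

lemma tailWeight_self_add_one (m : ℕ) : tailWeight m (m + 1) = 0 := by
  simp [tailWeight_succ]

lemma tailWeight_zero_mul_factorial_mul_factorial (m : ℕ) :
    tailWeight m 0 * m ! * m ! = (2 * m + 1)! := by
  have h := choose_mul_factorial_mul_factorial (show m + 1 ≤ 2 * m + 1 by omega)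
  rw [show 2 * m + 1 - (m + 1) = m by omega, factorial_succ] at h
  rw [tailWeight, Nat.sub_zero, ← h]
  ring

lemma tailWeight_mul_tailWeight_eq {a b j : ℕ} (hja : j ≤ a) (hjb : j ≤ b) :
    tailWeight a (j + 1) * tailWeight b (j + 1)
        + (a + b + 1) * ((2 * j + 1) * (2 * a + 1).choose (a - j) * (2 * b + 1).choose (b - j))
      = tailWeight a j * tailWeight b j := by
  rw [tailWeight_succ, tailWeight_succ, tailWeight_eq a hja, tailWeight_eq b hjb]
  generalize (2 * a + 1).choose (a - j) = A
  generalize (2 * b + 1).choose (b - j) = B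
  obtain ⟨x, rfl⟩ := exists_add_of_le hja
  obtain ⟨y, rfl⟩ := exists_add_of_le hjb
  simp only [Nat.add_sub_cancel_left]
  ring

theorem add_add_one_mul_sum_choose_mul_choose_eq (a b : ℕ) :
    (a + b + 1) * ∑ j ∈ range (min a b + 1),
        (2 * j + 1) * (2 * a + 1).choose (a - j) * (2 * b + 1).choose (b - j)
      = tailWeight a 0 * tailWeight b 0 := by
  have telescope := add_sum_range_eq_of_forall_succ_add_eq
    (f := fun j => tailWeight a j * tailWeight b j) (n := min a b + 1) fun j hj =>
      tailWeight_mul_tailWeight_eq (by omega) (by omega)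
  have vanish : tailWeight a (min a b + 1) * tailWeight b (min a b + 1) = 0 := by
    rcases min_choice a b with h | h <;> rw [h] <;> simp [tailWeight_self_add_one]
  rwa [vanish, zero_add, ← mul_sum] at telescope

/-- For all integers `a, b ≥ 0`,
`Σ_{j=0}^{min(a,b)} (2j+1) · C(2a+1, a−j) · C(2b+1, b−j) = α(2a+1) α(2b+1) / (a+b+1)`,
where `α(2m+1) = (2m+1)! / (m! m!)`. -/
theorem annular_hypergeometric_identity_quasibipartite (a b : ℕ) :
    (∑ j ∈ Finset.range (min a b + 1),
        (2 * j + 1 : ℚ) * (Nat.choose (2 * a + 1) (a - j) : ℚ) * (Nat.choose (2 * b + 1) (b - j) : ℚ))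
      = ((Nat.factorial (2 * a + 1) : ℚ) / ((Nat.factorial a : ℚ) * (Nat.factorial a : ℚ)))
        * ((Nat.factorial (2 * b + 1) : ℚ) / ((Nat.factorial b : ℚ) * (Nat.factorial b : ℚ)))
        / ((a : ℚ) + (b : ℚ) + 1) := by
  have alpha (m : ℕ) : ((2 * m + 1)! : ℚ) / (m ! * m !) = tailWeight m 0 := by
    rw [div_eq_iff (by positivity), ← tailWeight_zero_mul_factorial_mul_factorial]
    push_cast
    ring
  rw [alpha, alpha, eq_div_iff (by positivity), mul_comm]
  exact_mod_cast add_add_one_mul_sum_choose_mul_choose_eq a b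
end

section
/- The stable-1/2 densities form a convolution semigroup: for all reals x > 0, y > 0 and a > 0, ∫₀^a q_x(s)·q_y(a−s) ds = q_{x+y}(a). -/
/-!
Substituting `s = a t² / (1 + t²)` turns the convolution integral into a multiple of
`∫₀^∞ (1 + t⁻²) exp (-(y t - x / t)² / (2a)) dt`, because
`x² / s + y² / (a - s) = ((x + y)² + (y t - x / t)²) / a`.
The Cauchy–Schlömilch substitution `r = y t - x / t`, a bijection of `(0, ∞)` onto `ℝ`, gives
`∫₀^∞ (y + x t⁻²) exp (-(y t - x / t)² / (2a)) dt = √(2πa)`, and the involution `t ↦ x / (y t)`,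
which changes the sign of `y t - x / t`, shows that the two summands contribute equally.
-/

open Real

/-- The stable-1/2 density with parameter `x`: `q_x(a) = (x/√(2πa³)) e^{−x²/(2a)}`. -/
noncomputable def stableHalfDensity (x a : ℝ) : ℝ :=
  x / Real.sqrt (2 * Real.pi * a ^ 3) * Real.exp (-x ^ 2 / (2 * a))

open MeasureTheory Set

section ChangeOfVariables

variable {E : Type*} [NormedAddCommGroup E] [NormedSpace ℝ E] {x y a : ℝ}

theorem hasDerivAt_mul_sub_div {τ : ℝ} (hτ : τ ≠ 0) :
    HasDerivAt (fun t : ℝ => y * t - x / t) (y + x / τ ^ 2) τ := by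
  have h := ((hasDerivAt_id' τ).const_mul y).sub ((hasDerivAt_inv hτ).const_mul x)
  simp only [mul_one, ← div_eq_mul_inv] at h
  exact h.congr_deriv (by ring)

theorem strictMonoOn_mul_sub_div (hx : 0 ≤ x) (hy : 0 < y) :
    StrictMonoOn (fun t : ℝ => y * t - x / t) (Ioi 0) := by
  intro t₁ ht₁ t₂ _ h
  have : x / t₂ ≤ x / t₁ := div_le_div_of_nonneg_left hx ht₁ h.le
  have : y * t₁ < y * t₂ := mul_lt_mul_of_pos_left h hy
  dsimp only
  linarith

theorem image_mul_sub_div_Ioi (hx : 0 < x) (hy : 0 < y) :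
    (fun t : ℝ => y * t - x / t) '' Ioi 0 = univ := by
  refine eq_univ_of_forall fun r => ?_
  set D := √(r ^ 2 + 4 * x * y)
  have hD : D ^ 2 = r ^ 2 + 4 * x * y := sq_sqrt (by positivity)
  have hrD : 0 < r + D := by nlinarith [sqrt_nonneg (r ^ 2 + 4 * x * y), mul_pos hx hy]
  refine ⟨(r + D) / (2 * y), div_pos hrD (by positivity), ?_⟩
  field_simp
  nlinarith

theorem integral_comp_mul_sub_div_Ioi (hx : 0 < x) (hy : 0 < y) (f : ℝ → E) :
    ∫ t in Ioi 0, (y + x / t ^ 2) • f (y * t - x / t) = ∫ r, f r := by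
  conv_rhs => rw [← setIntegral_univ, ← image_mul_sub_div_Ioi hx hy]
  rw [integral_image_eq_integral_abs_deriv_smul measurableSet_Ioi
      (fun t ht => (hasDerivAt_mul_sub_div (ne_of_gt ht)).hasDerivWithinAt)
      (strictMonoOn_mul_sub_div hx.le hy).injOn]
  refine setIntegral_congr_fun measurableSet_Ioi fun t _ => ?_
  rw [abs_of_pos (by positivity)]

theorem integrableOn_comp_mul_sub_div_Ioi_iff (hx : 0 < x) (hy : 0 < y) (f : ℝ → E) :
    IntegrableOn (fun t => (y + x / t ^ 2) • f (y * t - x / t)) (Ioi 0) ↔ Integrable f := by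
  conv_rhs => rw [← integrableOn_univ, ← image_mul_sub_div_Ioi hx hy]
  rw [integrableOn_image_iff_integrableOn_abs_deriv_smul measurableSet_Ioi
      (fun t ht => (hasDerivAt_mul_sub_div (ne_of_gt ht)).hasDerivWithinAt)
      (strictMonoOn_mul_sub_div hx.le hy).injOn]
  refine integrableOn_congr_fun (fun t _ => ?_) measurableSet_Ioi
  rw [abs_of_pos (by positivity)]

theorem hasDerivAt_const_div (c : ℝ) {τ : ℝ} (hτ : τ ≠ 0) :
    HasDerivAt (fun t : ℝ => c / t) (-(c / τ ^ 2)) τ := by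
  have h := (hasDerivAt_inv hτ).const_mul c
  simp only [← div_eq_mul_inv] at h
  exact h.congr_deriv (by ring)

theorem integral_comp_div_Ioi {c : ℝ} (hc : 0 < c) (f : ℝ → E) :
    ∫ t in Ioi 0, (c / t ^ 2) • f (c / t) = ∫ t in Ioi 0, f t := by
  have himage : (fun t : ℝ => c / t) '' Ioi 0 = Ioi 0 := by
    refine Subset.antisymm (image_subset_iff.2 fun t ht => div_pos hc ht) fun t ht => ?_
    exact ⟨c / t, div_pos hc ht, div_div_cancel₀ hc.ne'⟩
  have hinj : InjOn (fun t : ℝ => c / t) (Ioi 0) := fun t₁ _ t₂ _ h => by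
    simpa [div_div_cancel₀ hc.ne'] using congrArg (c / ·) h
  conv_rhs => rw [← himage]
  rw [integral_image_eq_integral_abs_deriv_smul measurableSet_Ioi
      (fun t (ht : 0 < t) => (hasDerivAt_const_div c ht.ne').hasDerivWithinAt) hinj]
  refine setIntegral_congr_fun measurableSet_Ioi fun t (ht : 0 < t) => ?_
  rw [abs_neg, abs_of_pos (by positivity)]

theorem hasDerivAt_mul_sq_div_one_add_sq (a τ : ℝ) :
    HasDerivAt (fun t : ℝ => a * t ^ 2 / (1 + t ^ 2)) (2 * a * τ / (1 + τ ^ 2) ^ 2) τ := by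
  have h := ((hasDerivAt_pow 2 τ).const_mul a).div ((hasDerivAt_pow 2 τ).const_add 1)
    (by positivity)
  exact h.congr_deriv (by field_simp; ring)

theorem image_mul_sq_div_one_add_sq_Ioi (ha : 0 < a) :
    (fun t : ℝ => a * t ^ 2 / (1 + t ^ 2)) '' Ioi 0 = Ioo 0 a := by
  refine Subset.antisymm (image_subset_iff.2 fun t (ht : 0 < t) => ⟨by positivity, ?_⟩) ?_
  · show a * t ^ 2 / (1 + t ^ 2) < a
    rw [div_lt_iff₀ (by positivity)]
    nlinarith
  · rintro s ⟨hs, hsa⟩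
    have : 0 < a - s := by linarith
    refine ⟨√(s / (a - s)), sqrt_pos.2 (by positivity), ?_⟩
    simp only
    rw [sq_sqrt (by positivity)]
    field_simp
    ring

theorem injOn_mul_sq_div_one_add_sq (ha : 0 < a) :
    InjOn (fun t : ℝ => a * t ^ 2 / (1 + t ^ 2)) (Ioi 0) := by
  intro t₁ (ht₁ : 0 < t₁) t₂ (ht₂ : 0 < t₂) h
  rw [div_eq_div_iff (by positivity) (by positivity)] at h
  nlinarith [mul_pos ha (add_pos ht₁ ht₂)]

theorem integral_comp_mul_sq_div_one_add_sq_Ioi (ha : 0 < a) (f : ℝ → E) :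
    ∫ t in Ioi 0, (2 * a * t / (1 + t ^ 2) ^ 2) • f (a * t ^ 2 / (1 + t ^ 2))
      = ∫ s in Ioo 0 a, f s := by
  rw [← image_mul_sq_div_one_add_sq_Ioi ha,
    integral_image_eq_integral_abs_deriv_smul measurableSet_Ioi
      (fun t _ => (hasDerivAt_mul_sq_div_one_add_sq a t).hasDerivWithinAt)
      (injOn_mul_sq_div_one_add_sq ha)]
  refine setIntegral_congr_fun measurableSet_Ioi fun t (ht : 0 < t) => ?_
  rw [abs_of_pos (by positivity)]

end ChangeOfVariables

section Gaussian

variable {x y a : ℝ}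

theorem integral_exp_neg_sq_div (ha : 0 < a) : ∫ r, exp (-r ^ 2 / (2 * a)) = √(2 * π * a) := by
  simp_rw [neg_div, div_eq_inv_mul _ (2 * a), ← neg_mul]
  rw [integral_gaussian]
  congr 1
  field_simp

theorem integrable_exp_neg_sq_div (ha : 0 < a) : Integrable fun r => exp (-r ^ 2 / (2 * a)) := by
  simp_rw [neg_div, div_eq_inv_mul _ (2 * a), ← neg_mul]
  exact integrable_exp_neg_mul_sq (by positivity)

theorem integral_add_div_sq_mul_gaussian (hx : 0 < x) (hy : 0 < y) (ha : 0 < a) :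
    ∫ t in Ioi 0, (y + x / t ^ 2) * exp (-(y * t - x / t) ^ 2 / (2 * a)) = √(2 * π * a) :=
  (integral_comp_mul_sub_div_Ioi hx hy fun r => exp (-r ^ 2 / (2 * a))).trans
    (integral_exp_neg_sq_div ha)

theorem integrableOn_add_div_sq_mul_gaussian (hx : 0 < x) (hy : 0 < y) (ha : 0 < a) :
    IntegrableOn (fun t => (y + x / t ^ 2) * exp (-(y * t - x / t) ^ 2 / (2 * a))) (Ioi 0) :=
  (integrableOn_comp_mul_sub_div_Ioi_iff hx hy fun r => exp (-r ^ 2 / (2 * a))).2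
    (integrable_exp_neg_sq_div ha)

theorem integral_mul_gaussian_eq_integral_div_sq_mul_gaussian (hx : 0 < x) (hy : 0 < y) :
    ∫ t in Ioi 0, y * exp (-(y * t - x / t) ^ 2 / (2 * a))
      = ∫ t in Ioi 0, x / t ^ 2 * exp (-(y * t - x / t) ^ 2 / (2 * a)) := by
  rw [← integral_comp_div_Ioi (div_pos hx hy)]
  refine setIntegral_congr_fun measurableSet_Ioi fun t (ht : 0 < t) => ?_
  have hsymm : y * (x / y / t) - x / (x / y / t) = -(y * t - x / t) := by
    field_simp
    ring
  rw [smul_eq_mul, hsymm, neg_sq]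
  field_simp

theorem integral_one_add_inv_sq_mul_gaussian (hx : 0 < x) (hy : 0 < y) (ha : 0 < a) :
    ∫ t in Ioi 0, (1 + 1 / t ^ 2) * exp (-(y * t - x / t) ^ 2 / (2 * a))
      = (1 / x + 1 / y) / 2 * √(2 * π * a) := by
  set G := fun t => exp (-(y * t - x / t) ^ 2 / (2 * a))
  have hP : IntegrableOn (fun t => y * G t) (Ioi 0) := by
    refine (integrableOn_add_div_sq_mul_gaussian hx hy ha).mono' (by fun_prop) ?_
    refine ae_restrict_of_forall_mem measurableSet_Ioi fun t (ht : 0 < t) => ?_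
    rw [norm_of_nonneg (by positivity)]
    exact mul_le_mul_of_nonneg_right (le_add_of_nonneg_right (by positivity)) (exp_pos _).le
  have hQ : IntegrableOn (fun t => x / t ^ 2 * G t) (Ioi 0) := by
    refine (integrableOn_add_div_sq_mul_gaussian hx hy ha).mono' (by fun_prop) ?_
    refine ae_restrict_of_forall_mem measurableSet_Ioi fun t (ht : 0 < t) => ?_
    rw [norm_of_nonneg (by positivity)]
    exact mul_le_mul_of_nonneg_right (le_add_of_nonneg_left hy.le) (exp_pos _).le
  have hsum : (∫ t in Ioi 0, y * G t) + ∫ t in Ioi 0, x / t ^ 2 * G t = √(2 * π * a) := by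
    rw [← integral_add hP hQ, ← integral_add_div_sq_mul_gaussian hx hy ha]
    simp_rw [add_mul]
    rfl
  have hsymm := integral_mul_gaussian_eq_integral_div_sq_mul_gaussian (a := a) hx hy
  calc ∫ t in Ioi 0, (1 + 1 / t ^ 2) * G t
      = (1 / y) * (∫ t in Ioi 0, y * G t) + (1 / x) * ∫ t in Ioi 0, x / t ^ 2 * G t := by
        rw [← integral_const_mul, ← integral_const_mul,
          ← integral_add (hP.const_mul _) (hQ.const_mul _)]
        refine setIntegral_congr_fun measurableSet_Ioi fun t (ht : 0 < t) => ?_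
        field_simp
    _ = (1 / x + 1 / y) / 2 * √(2 * π * a) := by
        rw [← hsum, hsymm]
        ring

end Gaussian

theorem sqrt_two_pi_mul_pow_three {s : ℝ} (hs : 0 ≤ s) :
    √(2 * π * s ^ 3) = s * √(2 * π * s) := by
  rw [show 2 * π * s ^ 3 = s ^ 2 * (2 * π * s) by ring, sqrt_mul (sq_nonneg s), sqrt_sq hs]

theorem stableHalfDensity_mul_comp_mul_sq_div_one_add_sq (x y : ℝ) {a t : ℝ} (ha : 0 < a)
    (ht : 0 < t) :
    2 * a * t / (1 + t ^ 2) ^ 2 * (stableHalfDensity x (a * t ^ 2 / (1 + t ^ 2)) *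
        stableHalfDensity y (a - a * t ^ 2 / (1 + t ^ 2)))
      = x * y / (π * a ^ 2) * exp (-(x + y) ^ 2 / (2 * a)) *
        ((1 + 1 / t ^ 2) * exp (-(y * t - x / t) ^ 2 / (2 * a))) := by
  obtain ⟨u, hu, rfl⟩ : ∃ u > 0, a = (1 + t ^ 2) * u :=
    ⟨a / (1 + t ^ 2), by positivity, by field_simp⟩
  have hs : (1 + t ^ 2) * u * t ^ 2 / (1 + t ^ 2) = t ^ 2 * u := by field_simp
  have hs' : (1 + t ^ 2) * u - t ^ 2 * u = u := by ring
  have hsqrt : √(2 * π * (t ^ 2 * u) ^ 3) = t ^ 3 * u * √(2 * π * u) := by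
    rw [sqrt_two_pi_mul_pow_three (by positivity), mul_left_comm, sqrt_mul (by positivity),
      sqrt_sq ht.le]
    ring
  have hexp : exp (-x ^ 2 / (2 * (t ^ 2 * u))) * exp (-y ^ 2 / (2 * u))
      = exp (-(x + y) ^ 2 / (2 * ((1 + t ^ 2) * u))) *
          exp (-(y * t - x / t) ^ 2 / (2 * ((1 + t ^ 2) * u))) := by
    rw [← exp_add, ← exp_add]
    congr 1
    field_simp
    ring
  have hR : √(2 * π * u) ^ 2 = 2 * π * u := sq_sqrt (by positivity)
  unfold stableHalfDensity
  rw [hs, hs', hsqrt, sqrt_two_pi_mul_pow_three hu.le]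
  calc _ = 2 * ((1 + t ^ 2) * u) * t / (1 + t ^ 2) ^ 2 * x * y /
          (t ^ 3 * u ^ 2 * √(2 * π * u) ^ 2) *
          (exp (-x ^ 2 / (2 * (t ^ 2 * u))) * exp (-y ^ 2 / (2 * u))) := by
        field_simp
    _ = _ := by
        rw [hexp, hR]
        field_simp
        ring

/-- The stable-1/2 densities form a convolution semigroup: for `x, y, a > 0`,
`∫₀^a q_x(s) q_y(a−s) ds = q_{x+y}(a)`. -/
theorem stableHalf_convolution_semigroup (x y a : ℝ) (hx : 0 < x) (hy : 0 < y) (ha : 0 < a) :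
    ∫ s in (0 : ℝ)..a, stableHalfDensity x s * stableHalfDensity y (a - s)
      = stableHalfDensity (x + y) a := by
  rw [intervalIntegral.integral_of_le ha.le, integral_Ioc_eq_integral_Ioo,
    ← integral_comp_mul_sq_div_one_add_sq_Ioi ha]
  simp only [smul_eq_mul]
  rw [setIntegral_congr_fun measurableSet_Ioi fun t (ht : 0 < t) =>
      stableHalfDensity_mul_comp_mul_sq_div_one_add_sq x y ha ht,
    integral_const_mul, integral_one_add_inv_sq_mul_gaussian hx hy ha, stableHalfDensity,
    sqrt_two_pi_mul_pow_three ha.le]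
  field_simp
  rw [sq_sqrt (by positivity)]
  ring
end

section
/- For every real ℒ > 0, one has ∫₀¹ q_ℒ(x)/√(1−x) dx = e^{−ℒ²/2}, where q_ℒ(x) = (ℒ/√(2πx³))·e^{−ℒ²/(2x)}. (This computes the normalizing constant of the limiting area density for random pairs of pants.) -/
/-!
Substituting `x = L² / (L² + y²)` maps `(0, ∞)` decreasingly onto `(0, 1)`, and with
`r = √(L² + y²)` one has `x = (L / r)²`, `√(1 - x) = y / r` and `L² / (2x) = (L² + y²) / 2`.
The integrand then becomes the Gaussian `√(2 / π) e^{-L²/2} e^{-y²/2}`, whose integral over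
`(0, ∞)` is `e^{-L²/2}`.
-/

open Real

open Set MeasureTheory

theorem stableHalfDensity_sq (x : ℝ) {t : ℝ} (ht : 0 < t) :
    stableHalfDensity x (t ^ 2) = x / (√(2 * π) * t ^ 3) * exp (-x ^ 2 / (2 * t ^ 2)) := by
  have h : 2 * π * (t ^ 2) ^ 3 = (√(2 * π) * t ^ 3) ^ 2 := by
    rw [mul_pow, sq_sqrt (by positivity)]; ring
  rw [stableHalfDensity, h, sqrt_sq (by positivity)]

section Substitution

variable {L : ℝ}

theorem image_sq_div_sq_add_sq_Ioi (hL : L ≠ 0) :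
    (fun y => L ^ 2 / (L ^ 2 + y ^ 2)) '' Ioi 0 = Ioo 0 1 := by
  ext x
  constructor
  · rintro ⟨y, hy : 0 < y, rfl⟩
    exact ⟨by positivity, (div_lt_one (by positivity)).2 (by nlinarith)⟩
  · rintro ⟨hx0, hx1⟩
    have h1x : 0 < 1 - x := by linarith
    refine ⟨√(L ^ 2 * (1 - x) / x), sqrt_pos.2 (by positivity), ?_⟩
    change L ^ 2 / (L ^ 2 + √(L ^ 2 * (1 - x) / x) ^ 2) = x
    rw [sq_sqrt (by positivity)]
    field_simp
    ring

theorem strictAntiOn_sq_div_sq_add_sq (hL : L ≠ 0) :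
    StrictAntiOn (fun y => L ^ 2 / (L ^ 2 + y ^ 2)) (Ici 0) := by
  intro a ha b hb hab
  have hab2 : a ^ 2 < b ^ 2 := pow_lt_pow_left₀ hab ha two_ne_zero
  exact div_lt_div_of_pos_left (by positivity) (by positivity) (by linarith)

theorem hasDerivAt_sq_div_sq_add_sq (hL : L ≠ 0) (y : ℝ) :
    HasDerivAt (fun y => L ^ 2 / (L ^ 2 + y ^ 2)) (-(2 * L ^ 2 * y) / (L ^ 2 + y ^ 2) ^ 2) y := by
  have h : HasDerivAt (fun y => L ^ 2 / (L ^ 2 + y ^ 2)) _ y :=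
    (hasDerivAt_const y (L ^ 2)).div ((hasDerivAt_pow 2 y).const_add (L ^ 2)) (by positivity)
  convert h using 1
  norm_num
  ring

theorem abs_deriv_mul_stableHalfDensity_div_sqrt (hL : 0 < L) {y : ℝ} (hy : 0 < y) :
    |-(2 * L ^ 2 * y) / (L ^ 2 + y ^ 2) ^ 2| *
        (stableHalfDensity L (L ^ 2 / (L ^ 2 + y ^ 2)) / √(1 - L ^ 2 / (L ^ 2 + y ^ 2))) =
      2 / √(2 * π) * exp (-L ^ 2 / 2) * exp (-(1 / 2) * y ^ 2) := by
  set r := √(L ^ 2 + y ^ 2)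
  have hr : 0 < r := sqrt_pos.2 (by positivity)
  have hr2 : r ^ 2 = L ^ 2 + y ^ 2 := sq_sqrt (by positivity)
  have hx : L ^ 2 / (L ^ 2 + y ^ 2) = (L / r) ^ 2 := by rw [div_pow, hr2]
  have hsqrt : √(1 - (L / r) ^ 2) = y / r := by
    rw [← sqrt_sq (by positivity : 0 ≤ y / r), div_pow, div_pow, hr2]
    congr 1
    field_simp
    ring
  have hexp : exp (-L ^ 2 / (2 * (L / r) ^ 2)) = exp (-L ^ 2 / 2) * exp (-(1 / 2) * y ^ 2) := by
    rw [← exp_add]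
    congr 1
    field_simp
    rw [hr2]
    ring
  rw [hx, stableHalfDensity_sq L (by positivity), hsqrt, hexp, ← hr2,
    abs_of_nonpos (div_nonpos_of_nonpos_of_nonneg (by nlinarith) (by positivity))]
  field_simp

end Substitution

/-- For every `ℒ > 0`, `∫₀¹ q_ℒ(x)/√(1−x) dx = e^{−ℒ²/2}`. -/
theorem integral_stableHalf_div_sqrt (L : ℝ) (hL : 0 < L) :
    ∫ x in (0 : ℝ)..1, stableHalfDensity L x / Real.sqrt (1 - x) = Real.exp (-L ^ 2 / 2) := by
  rw [intervalIntegral.integral_of_le zero_le_one, integral_Ioc_eq_integral_Ioo,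
    ← image_sq_div_sq_add_sq_Ioi hL.ne',
    integral_image_eq_integral_abs_deriv_smul measurableSet_Ioi
      (fun y _ => (hasDerivAt_sq_div_sq_add_sq hL.ne' y).hasDerivWithinAt)
      ((strictAntiOn_sq_div_sq_add_sq hL.ne').injOn.mono Ioi_subset_Ici_self),
    setIntegral_congr_fun measurableSet_Ioi
      (fun y hy => (smul_eq_mul ..).trans (abs_deriv_mul_stableHalfDensity_div_sqrt hL hy)),
    integral_const_mul, integral_gaussian_Ioi]
  field_simp
end

section
/- For all reals ℒ₁, ℒ₂, ℒ₃ > 0, the integral over the open simplex {(a₁,a₂,a₃) ∈ (0,∞)³ : a₁+a₂+a₃ < 1} of q_{ℒ₁}(a₁)·q_{ℒ₂}(a₂)·q_{ℒ₃}(a₃)/(2√(1−a₁−a₂−a₃)) d a₁ d a₂ d a₃ equals ∫₀¹ q_{ℒ₁+ℒ₂+ℒ₃}(x)/(2√(1−x)) dx, which equals (1/2)·e^{−(ℒ₁+ℒ₂+ℒ₃)²/2}. In particular, the function q_{ℒ₁}(a₁)q_{ℒ₂}(a₂)q_{ℒ₃}(a₃)/(2√(1−a₁−a₂−a₃)) divided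 by ∫₀¹ q_{ℒ₁+ℒ₂+ℒ₃}(x)/(2√(1−x))dx is a probability density on the simplex (the limiting joint density of the rescaled exterior areas of a random pair of pants). -/
open Real MeasureTheory
open Set
open scoped ENNReal

lemma lintegral_image_1d {s : Set ℝ} {f f' : ℝ → ℝ}
    (hs : MeasurableSet s) (hf' : ∀ x ∈ s, HasDerivWithinAt f (f' x) s x)
    (hf : InjOn f s) (g : ℝ → ℝ≥0∞) :
    ∫⁻ x in f '' s, g x = ∫⁻ x in s, ENNReal.ofReal |f' x| * g (f x) := by
  simpa only [ContinuousLinearMap.det_toSpanSingleton] using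
    lintegral_image_eq_lintegral_abs_det_fderiv_mul volume hs
      (fun x hx => (hf' x hx).hasFDerivWithinAt) hf g

lemma glasser {a b : ℝ} (ha : 0 < a) (hb : 0 ≤ b) :
    ∫⁻ p in Ioi (0:ℝ), ENNReal.ofReal (Real.exp (-(a*p - b/p)^2))
      = ENNReal.ofReal (Real.sqrt π / (2*a)) := by
  rcases eq_or_lt_of_le hb with h0 | hb
  · -- b = 0
    have : ∀ p ∈ Ioi (0:ℝ), ENNReal.ofReal (Real.exp (-(a*p - b/p)^2))
        = ENNReal.ofReal (Real.exp (-(a^2) * p^2)) := by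
      intro p hp
      rw [← h0]
      ring_nf
    rw [setLIntegral_congr_fun measurableSet_Ioi this]
    rw [← ofReal_integral_eq_lintegral_ofReal]
    · rw [integral_gaussian_Ioi (a^2)]
      congr 1
      rw [Real.sqrt_div (le_of_lt pi_pos), Real.sqrt_sq ha.le]
      ring
    · exact (integrable_exp_neg_mul_sq (by positivity)).integrableOn
    · exact ae_of_all _ fun x => (Real.exp_pos _).le
  · -- b > 0
    set g : ℝ → ℝ≥0∞ := fun p => ENNReal.ofReal (Real.exp (-(a*p - b/p)^2)) with hg
    have hgm : Measurable g := by
      apply Measurable.ennreal_ofReal; fun_prop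
    set J : ℝ≥0∞ := ∫⁻ p in Ioi (0:ℝ), g p with hJ
    -- Step A : inversion symmetry
    have hinv : J = ∫⁻ p in Ioi (0:ℝ), ENNReal.ofReal (b/(a*p^2)) * g p := by
      have himg : (fun p => b/(a*p)) '' Ioi (0:ℝ) = Ioi (0:ℝ) := by
        ext y
        constructor
        · rintro ⟨p, hp, rfl⟩
          have hp' : (0:ℝ) < p := hp
          exact div_pos hb (by positivity)
        · intro hy
          have hy' : (0:ℝ) < y := hy
          exact ⟨b/(a*y), div_pos hb (by positivity), by
            simp only; field_simp⟩
      have hderiv : ∀ p ∈ Ioi (0:ℝ), HasDerivWithinAt (fun p => b/(a*p))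
          (-(b/(a*p^2))) (Ioi (0:ℝ)) p := by
        intro p hp
        have hp' : (0:ℝ) < p := hp
        have hp0 : (p:ℝ) ≠ 0 := ne_of_gt hp'
        have h1 : HasDerivAt (fun p : ℝ => p⁻¹) (-(p^2)⁻¹) p := hasDerivAt_inv hp0
        have h2 := h1.const_mul (b/a)
        have hfun : (fun p : ℝ => b/(a*p)) = (fun y : ℝ => b/a * y⁻¹) := by
          funext x; rw [div_mul_eq_div_div, div_eq_mul_inv]
        have hval : b/a * -(p^2)⁻¹ = -(b/(a*p^2)) := by
          field_simp
        have h3 : HasDerivAt (fun p : ℝ => b/(a*p)) (-(b/(a*p^2))) p := by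
          rw [hfun, ← hval]; exact h2
        exact h3.hasDerivWithinAt
      have hinj : InjOn (fun p => b/(a*p)) (Ioi (0:ℝ)) := by
        intro p hp q hq h
        have hp' : (0:ℝ) < p := hp
        have hq' : (0:ℝ) < q := hq
        simp only at h
        rw [div_eq_div_iff (by positivity) (by positivity)] at h
        have h2 := mul_left_cancel₀ hb.ne' h
        exact (mul_left_cancel₀ ha.ne' h2).symm
      have key := lintegral_image_1d measurableSet_Ioi hderiv hinj g
      rw [himg] at key
      rw [hJ, key]
      apply setLIntegral_congr_fun measurableSet_Ioi
      intro p hp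
      have hp' : (0:ℝ) < p := hp
      have hp0 : (p:ℝ) ≠ 0 := ne_of_gt hp'
      have e1 : a * (b/(a*p)) - b/(b/(a*p)) = -(a*p - b/p) := by
        field_simp; ring
      have e2 : g (b/(a*p)) = g p := by
        simp only [hg]
        rw [e1, neg_sq]
      beta_reduce
      rw [e2, abs_neg, abs_of_pos (by positivity : (0:ℝ) < b/(a*p^2))]
    -- Step B : the full substitution
    have hkey : ENNReal.ofReal (Real.sqrt π)
        = ∫⁻ p in Ioi (0:ℝ), ENNReal.ofReal |a + b/p^2| * g p := by
      have himg : (fun p => a*p - b/p) '' Ioi (0:ℝ) = univ := by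
        apply eq_univ_of_forall
        intro y
        set D := Real.sqrt (y^2 + 4*a*b) with hD
        have hD2 : D^2 = y^2 + 4*a*b := Real.sq_sqrt (by positivity)
        have hDy : |y| < D := by
          rw [hD, ← Real.sqrt_sq_eq_abs]
          exact Real.sqrt_lt_sqrt (by positivity) (by nlinarith)
        have hp : 0 < (y + D)/(2*a) := by
          have : -y ≤ |y| := neg_le_abs y
          apply div_pos (by linarith) (by positivity)
        refine ⟨(y + D)/(2*a), hp, ?_⟩
        have hyD : y + D ≠ 0 := by
          have : -y ≤ |y| := neg_le_abs y
          intro h; nlinarith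
        have h2a : (2*a) ≠ 0 := by positivity
        show a * ((y + D)/(2*a)) - b/((y + D)/(2*a)) = y
        field_simp [hyD]
        nlinarith [hD2]
      have hderiv : ∀ p ∈ Ioi (0:ℝ), HasDerivWithinAt (fun p => a*p - b/p)
          (a + b/p^2) (Ioi (0:ℝ)) p := by
        intro p hp
        have hp' : (0:ℝ) < p := hp
        have hp0 : (p:ℝ) ≠ 0 := ne_of_gt hp'
        have h2 : HasDerivAt (fun p : ℝ => p⁻¹) (-(p^2)⁻¹) p := hasDerivAt_inv hp0
        have h3 := ((hasDerivAt_id p).const_mul a).sub (h2.const_mul b)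
        have hfun2 : (fun p : ℝ => a*p - b/p) = (fun x : ℝ => a * id x - b * x⁻¹) := by
          funext x; simp [div_eq_mul_inv]
        have hval2 : a * 1 - b * -(p^2)⁻¹ = a + b/p^2 := by
          rw [div_eq_mul_inv]; ring
        have h4 : HasDerivAt (fun p : ℝ => a*p - b/p) (a + b/p^2) p := by
          rw [hfun2, ← hval2]; exact h3
        exact h4.hasDerivWithinAt
      have hinj : InjOn (fun p => a*p - b/p) (Ioi (0:ℝ)) := by
        apply StrictMonoOn.injOn
        intro p hp q hq hpq
        have hp' : (0:ℝ) < p := hp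
        have hq' : (0:ℝ) < q := hq
        simp only
        have h5 : b/q < b/p := div_lt_div_of_pos_left hb hp' hpq
        nlinarith
      have key := lintegral_image_1d measurableSet_Ioi hderiv hinj
        (fun x => ENNReal.ofReal (Real.exp (-x^2)))
      rw [himg, Measure.restrict_univ] at key
      have hint : Integrable (fun x : ℝ => Real.exp (-x^2)) := by
        simpa using integrable_exp_neg_mul_sq (zero_lt_one)
      have hgauss : ∫ x : ℝ, Real.exp (-x^2) = Real.sqrt π := by
        have := integral_gaussian 1
        simpa using this
      rw [← ofReal_integral_eq_lintegral_ofReal hint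
        (ae_of_all _ fun x => (Real.exp_pos _).le), hgauss] at key
      rw [key]
    -- Step C : combine
    have habs : ∀ p ∈ Ioi (0:ℝ), ENNReal.ofReal |a + b/p^2| * g p
        = ENNReal.ofReal a * g p + ENNReal.ofReal a * (ENNReal.ofReal (b/(a*p^2)) * g p) := by
      intro p hp
      have hp' : (0:ℝ) < p := hp
      have e3 : |a + b/p^2| = a + a * (b/(a*p^2)) := by
        rw [abs_of_pos (by positivity)]
        field_simp
      rw [e3, ENNReal.ofReal_add ha.le (by positivity), ENNReal.ofReal_mul ha.le,
        add_mul, mul_assoc]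
    rw [setLIntegral_congr_fun measurableSet_Ioi habs] at hkey
    rw [lintegral_add_left (f := fun p => ENNReal.ofReal a * g p) (measurable_const.mul hgm)] at hkey
    rw [lintegral_const_mul _ hgm, lintegral_const_mul _ (by fun_prop : Measurable
      (fun p : ℝ => ENNReal.ofReal (b/(a*p^2)) * g p))] at hkey
    rw [← hinv, ← hJ] at hkey
    have h2key : 2 * ENNReal.ofReal a * J = ENNReal.ofReal (Real.sqrt π) := by
      rw [hkey]; ring
    have hJval : J = ENNReal.ofReal (Real.sqrt π) / (2 * ENNReal.ofReal a) := by
      rw [ENNReal.eq_div_iff]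
      · exact h2key
      · exact mul_ne_zero (by simp) (ENNReal.ofReal_pos.mpr ha).ne'
      · exact ENNReal.mul_ne_top (by simp) ENNReal.ofReal_ne_top
    rw [hJval]
    rw [ENNReal.ofReal_div_of_pos (by positivity), ENNReal.ofReal_mul (by norm_num : (0:ℝ) ≤ 2)]
    norm_num

lemma pointwise_alg (L M T p : ℝ) (hL : 0 < L) (hM : 0 ≤ M) (hT : 0 < T) (hp : 0 < p) :
    (2*T*p/(1+p^2)^2) * (stableHalfDensity L (T/(1+p^2)) *
      (Real.exp (-M^2/(2*(T - T/(1+p^2)))) / (2 * Real.sqrt (T - T/(1+p^2)))))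
    = (L/(Real.sqrt (2*π)*T) * Real.exp (-(L+M)^2/(2*T))) *
      Real.exp (-((L/Real.sqrt (2*T))*p - (M/Real.sqrt (2*T))/p)^2) := by
  obtain ⟨t, ht0, rfl⟩ : ∃ t, 0 < t ∧ T = t^2 :=
    ⟨Real.sqrt T, Real.sqrt_pos.2 hT, (Real.sq_sqrt hT.le).symm⟩
  obtain ⟨v, hv0, hv⟩ : ∃ v, 0 < v ∧ 1 + p^2 = v^2 :=
    ⟨Real.sqrt (1+p^2), Real.sqrt_pos.2 (by positivity), (Real.sq_sqrt (by positivity)).symm⟩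
  have hw : Real.sqrt (2*π)^2 = 2*π := Real.sq_sqrt (by positivity)
  have hw0 : 0 < Real.sqrt (2*π) := Real.sqrt_pos.2 (by positivity)
  have h20 : 0 < Real.sqrt 2 := Real.sqrt_pos.2 (by norm_num)
  have h2 : Real.sqrt 2 ^ 2 = 2 := Real.sq_sqrt (by norm_num)
  have hpi : Real.sqrt π^2 = π := Real.sq_sqrt pi_pos.le
  have hp0 : p ≠ 0 := hp.ne'
  have ht0' : t ≠ 0 := ht0.ne'
  have hv0' : v ≠ 0 := hv0.ne'
  rw [hv, stableHalfDensity]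
  rw [show t^2 - t^2/v^2 = t^2*p^2/v^2 from by
    rw [eq_div_iff (by positivity : (v:ℝ)^2 ≠ 0), sub_mul,
      div_mul_cancel₀ _ (by positivity : (v:ℝ)^2 ≠ 0)]
    linear_combination (-t^2) * hv]
  rw [show Real.sqrt (2*π*(t^2/v^2)^3) = Real.sqrt (2*π)*t^3/v^3 from by
    rw [show 2*π*(t^2/v^2)^3 = (Real.sqrt (2*π)*t^3/v^3)^2 from by
      field_simp
      linear_combination (-1 : ℝ) * hw]
    exact Real.sqrt_sq (by positivity)]
  rw [show Real.sqrt (t^2*p^2/v^2) = t*p/v from by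
    rw [show t^2*p^2/v^2 = (t*p/v)^2 from by ring]
    exact Real.sqrt_sq (by positivity)]
  rw [show Real.sqrt (2*t^2) = Real.sqrt 2 * t from by
    rw [show 2*t^2 = (Real.sqrt 2*t)^2 from by rw [mul_pow, h2]]
    exact Real.sqrt_sq (by positivity)]
  have hE : Real.exp (-L^2/(2*(t^2/v^2))) * Real.exp (-M^2/(2*(t^2*p^2/v^2)))
      = Real.exp (-(L+M)^2/(2*t^2)) *
        Real.exp (-((L/(Real.sqrt 2*t))*p - (M/(Real.sqrt 2*t))/p)^2) := by
    rw [← Real.exp_add, ← Real.exp_add]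
    congr 1
    field_simp
    ring_nf
    linear_combination (-v^2*L^2*p^2 - v^2*M^2 + 2*L*M*p^2 + L^2*p^2 + p^2*M^2) * h2
      + (2*L^2*p^2 + 2*M^2) * hv
  calc (2*t^2*p/(v^2)^2) * ((L / (Real.sqrt (2*π)*t^3/v^3) *
          Real.exp (-L^2/(2*(t^2/v^2)))) *
        (Real.exp (-M^2/(2*(t^2*p^2/v^2))) / (2 * (t*p/v))))
      = ((2*t^2*p/(v^2)^2) * (L / (Real.sqrt (2*π)*t^3/v^3)) / (2 * (t*p/v))) *
        (Real.exp (-L^2/(2*(t^2/v^2))) * Real.exp (-M^2/(2*(t^2*p^2/v^2)))) := by ring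
    _ = (L/(Real.sqrt (2*π)*t^2)) *
        (Real.exp (-(L+M)^2/(2*t^2)) *
          Real.exp (-((L/(Real.sqrt 2*t))*p - (M/(Real.sqrt 2*t))/p)^2)) := by
        rw [hE]
        congr 1
        field_simp
    _ = (L/(Real.sqrt (2*π)*t^2) * Real.exp (-(L+M)^2/(2*t^2))) *
        Real.exp (-((L/(Real.sqrt 2*t))*p - (M/(Real.sqrt 2*t))/p)^2) := by ring

lemma LG (L M T : ℝ) (hL : 0 < L) (hM : 0 ≤ M) :
    ∫⁻ s in Ioo (0:ℝ) T, ENNReal.ofReal (stableHalfDensity L s *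
      (Real.exp (-M^2 / (2*(T - s))) / (2 * Real.sqrt (T - s))))
    = ENNReal.ofReal (Real.exp (-(L+M)^2 / (2*T)) / (2 * Real.sqrt T)) := by
  rcases le_or_gt T 0 with hT | hT
  · rw [Ioo_eq_empty (by simpa using not_lt.mpr hT), Measure.restrict_empty,
      lintegral_zero_measure]
    have hsT : Real.sqrt T = 0 := Real.sqrt_eq_zero_of_nonpos hT
    rw [hsT]
    norm_num
  · have hsqT2 : (0:ℝ) < Real.sqrt (2*T) := Real.sqrt_pos.2 (by positivity)
    have himg : (fun p => T/(1+p^2)) '' Ioi (0:ℝ) = Ioo 0 T := by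
      ext x
      constructor
      · rintro ⟨p, hp, rfl⟩
        have hp' : (0:ℝ) < p := hp
        constructor
        · positivity
        · exact div_lt_self hT (by nlinarith)
      · rintro ⟨hx0, hxT⟩
        have hq : 0 < T/x - 1 := by
          have : 1 < T/x := (one_lt_div hx0).2 hxT
          linarith
        refine ⟨Real.sqrt (T/x - 1), Real.sqrt_pos.2 hq, ?_⟩
        simp only
        rw [Real.sq_sqrt hq.le]
        field_simp
        ring
    have hderiv : ∀ p ∈ Ioi (0:ℝ), HasDerivWithinAt (fun p => T/(1+p^2))
        (-(2*T*p/(1+p^2)^2)) (Ioi (0:ℝ)) p := by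
      intro p hp
      have h1 : HasDerivAt (fun p : ℝ => 1+p^2) (2*p) p := by
        simpa using (hasDerivAt_pow 2 p).const_add 1
      have h2 := h1.inv (by positivity : (1:ℝ)+p^2 ≠ 0)
      have h3 := h2.const_mul T
      have hfun : (fun p : ℝ => T/(1+p^2)) = fun p : ℝ => T*(1+p^2)⁻¹ := by
        funext x; rw [div_eq_mul_inv]
      have hval : T * (-(2*p)/((1+p^2)^2)) = -(2*T*p/(1+p^2)^2) := by ring
      have h4 : HasDerivAt (fun p : ℝ => T/(1+p^2)) (-(2*T*p/(1+p^2)^2)) p := by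
        rw [hfun, ← hval]; exact h3
      exact h4.hasDerivWithinAt
    have hinj : InjOn (fun p => T/(1+p^2)) (Ioi (0:ℝ)) := by
      intro p hp q hq h
      have hp' : (0:ℝ) < p := hp
      have hq' : (0:ℝ) < q := hq
      simp only at h
      rw [div_eq_div_iff (by positivity) (by positivity)] at h
      have h2 := mul_left_cancel₀ hT.ne' h
      rcases lt_trichotomy p q with h3 | h3 | h3
      · nlinarith
      · exact h3
      · nlinarith
    have key := lintegral_image_1d measurableSet_Ioi hderiv hinj
      (fun x => ENNReal.ofReal (stableHalfDensity L x *
        (Real.exp (-M^2 / (2*(T - x))) / (2 * Real.sqrt (T - x)))))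
    rw [himg] at key
    rw [key]
    have hcong : ∀ p ∈ Ioi (0:ℝ),
        ENNReal.ofReal |(-(2*T*p/(1+p^2)^2))| *
          (fun x => ENNReal.ofReal (stableHalfDensity L x *
            (Real.exp (-M^2 / (2*(T - x))) / (2 * Real.sqrt (T - x))))) (T/(1+p^2))
        = ENNReal.ofReal (L/(Real.sqrt (2*π)*T) * Real.exp (-(L+M)^2/(2*T))) *
          ENNReal.ofReal (Real.exp (-((L/Real.sqrt (2*T))*p - (M/Real.sqrt (2*T))/p)^2)) := by
      intro p hp
      have hp' : (0:ℝ) < p := hp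
      simp only
      rw [← ENNReal.ofReal_mul (abs_nonneg _), ← ENNReal.ofReal_mul (by positivity)]
      congr 1
      rw [abs_neg, abs_of_pos (by positivity)]
      exact pointwise_alg L M T p hL hM hT hp'
    rw [setLIntegral_congr_fun measurableSet_Ioi hcong]
    rw [lintegral_const_mul _ (by
      apply Measurable.ennreal_ofReal; fun_prop)]
    rw [glasser (div_pos hL hsqT2) (div_nonneg hM hsqT2.le)]
    rw [← ENNReal.ofReal_mul (by positivity)]
    congr 1
    have e2T : Real.sqrt (2*T) = Real.sqrt 2 * Real.sqrt T :=
      Real.sqrt_mul (by norm_num) T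
    have e2π : Real.sqrt (2*π) = Real.sqrt 2 * Real.sqrt π :=
      Real.sqrt_mul (by norm_num) π
    have hsT : (0:ℝ) < Real.sqrt T := Real.sqrt_pos.2 hT
    have hs2 : (0:ℝ) < Real.sqrt 2 := Real.sqrt_pos.2 (by norm_num)
    have hsπ : (0:ℝ) < Real.sqrt π := Real.sqrt_pos.2 pi_pos
    have hT2 : Real.sqrt T ^ 2 = T := Real.sq_sqrt hT.le
    have h22 : Real.sqrt 2 ^ 2 = 2 := Real.sq_sqrt (by norm_num)
    have hπ2 : Real.sqrt π ^ 2 = π := Real.sq_sqrt pi_pos.le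
    rw [e2T, e2π]
    field_simp
    ring_nf
    linear_combination hT2

lemma stable_nonneg (L a : ℝ) (hL : 0 ≤ L) : 0 ≤ stableHalfDensity L a :=
  mul_nonneg (div_nonneg hL (Real.sqrt_nonneg _)) (Real.exp_pos _).le

lemma stable_meas (L : ℝ) : Measurable (stableHalfDensity L) := by
  unfold stableHalfDensity; fun_prop

lemma lint_Ioi_eq_Ioo (T : ℝ) (g : ℝ → ℝ≥0∞) (h : ∀ x, T ≤ x → g x = 0) :
    ∫⁻ x in Ioi (0:ℝ), g x = ∫⁻ x in Ioo 0 T, g x := by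
  rw [← lintegral_indicator measurableSet_Ioi, ← lintegral_indicator measurableSet_Ioo]
  apply lintegral_congr
  intro x
  by_cases hx : x ∈ Ioo 0 T
  · rw [Set.indicator_of_mem hx, Set.indicator_of_mem (mem_Ioi.2 hx.1)]
  · rw [Set.indicator_of_notMem hx]
    by_cases hx0 : x ∈ Ioi (0:ℝ)
    · rw [Set.indicator_of_mem hx0]
      apply h
      by_contra hc
      exact hx ⟨hx0, lt_of_not_ge hc⟩
    · rw [Set.indicator_of_notMem hx0]

lemma vanish_top {q C U : ℝ} (hU : U ≤ 0) :
    ENNReal.ofReal (q * (Real.exp C / (2 * Real.sqrt U))) = 0 := by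
  rw [Real.sqrt_eq_zero_of_nonpos hU]
  norm_num

/-- For `ℒ₁, ℒ₂, ℒ₃ > 0`, the integral over the open simplex of
`q_{ℒ₁}(a₁) q_{ℒ₂}(a₂) q_{ℒ₃}(a₃) / (2√(1−a₁−a₂−a₃))` equals
`∫₀¹ q_{ℒ₁+ℒ₂+ℒ₃}(x)/(2√(1−x)) dx = (1/2) e^{−(ℒ₁+ℒ₂+ℒ₃)²/2}`; in particular, the
normalized function is a probability density on the simplex. -/
theorem simplex_integral_stableHalf (L₁ L₂ L₃ : ℝ) (h₁ : 0 < L₁) (h₂ : 0 < L₂) (h₃ : 0 < L₃) :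
    (∫ p in {p : ℝ × ℝ × ℝ | 0 < p.1 ∧ 0 < p.2.1 ∧ 0 < p.2.2 ∧ p.1 + p.2.1 + p.2.2 < 1},
        stableHalfDensity L₁ p.1 * stableHalfDensity L₂ p.2.1 * stableHalfDensity L₃ p.2.2 /
          (2 * Real.sqrt (1 - p.1 - p.2.1 - p.2.2)))
      = ∫ x in (0 : ℝ)..1, stableHalfDensity (L₁ + L₂ + L₃) x / (2 * Real.sqrt (1 - x)) ∧
    (∫ x in (0 : ℝ)..1, stableHalfDensity (L₁ + L₂ + L₃) x / (2 * Real.sqrt (1 - x)))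
      = (1 / 2) * Real.exp (-(L₁ + L₂ + L₃) ^ 2 / 2) ∧
    (∫ p in {p : ℝ × ℝ × ℝ | 0 < p.1 ∧ 0 < p.2.1 ∧ 0 < p.2.2 ∧ p.1 + p.2.1 + p.2.2 < 1},
        stableHalfDensity L₁ p.1 * stableHalfDensity L₂ p.2.1 * stableHalfDensity L₃ p.2.2 /
          (2 * Real.sqrt (1 - p.1 - p.2.1 - p.2.2)) /
          (∫ x in (0 : ℝ)..1, stableHalfDensity (L₁ + L₂ + L₃) x / (2 * Real.sqrt (1 - x))))
      = 1 := by
  have hS0 : (0:ℝ) < L₁ + L₂ + L₃ := by positivity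
  -- Part 2 : the 1-D integral
  have part2 : (∫ x in (0 : ℝ)..1, stableHalfDensity (L₁ + L₂ + L₃) x / (2 * Real.sqrt (1 - x)))
      = (1 / 2) * Real.exp (-(L₁ + L₂ + L₃) ^ 2 / 2) := by
    rw [intervalIntegral.integral_of_le zero_le_one, integral_Ioc_eq_integral_Ioo]
    have hms : Measurable (fun x : ℝ =>
        stableHalfDensity (L₁+L₂+L₃) x / (2 * Real.sqrt (1 - x))) := by
      apply Measurable.div (stable_meas _)
      exact measurable_const.mul (measurable_const.sub measurable_id).sqrt
    rw [integral_eq_lintegral_of_nonneg_ae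
      (ae_of_all _ fun x => div_nonneg (stable_nonneg _ _ hS0.le) (by positivity))
      hms.aestronglyMeasurable]
    have hcong : ∀ x ∈ Ioo (0:ℝ) 1,
        ENNReal.ofReal (stableHalfDensity (L₁ + L₂ + L₃) x / (2 * Real.sqrt (1 - x)))
        = ENNReal.ofReal (stableHalfDensity (L₁ + L₂ + L₃) x *
            (Real.exp (-(0:ℝ)^2 / (2*(1 - x))) / (2 * Real.sqrt (1 - x)))) := by
      intro x _
      congr 1
      rw [show (-(0:ℝ)^2 / (2*(1 - x))) = 0 by norm_num, Real.exp_zero]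
      ring
    rw [setLIntegral_congr_fun measurableSet_Ioo hcong]
    rw [LG (L₁ + L₂ + L₃) 0 1 hS0 le_rfl]
    rw [ENNReal.toReal_ofReal (by positivity)]
    rw [add_zero, Real.sqrt_one]
    ring
  -- measurability facts
  have hS : MeasurableSet {p : ℝ × ℝ × ℝ | 0 < p.1 ∧ 0 < p.2.1 ∧ 0 < p.2.2 ∧
      p.1 + p.2.1 + p.2.2 < 1} := by
    apply MeasurableSet.inter
    · exact measurableSet_lt measurable_const measurable_fst
    apply MeasurableSet.inter
    · exact measurableSet_lt measurable_const (measurable_fst.comp measurable_snd)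
    apply MeasurableSet.inter
    · exact measurableSet_lt measurable_const (measurable_snd.comp measurable_snd)
    · exact measurableSet_lt ((measurable_fst.add
        (measurable_fst.comp measurable_snd)).add (measurable_snd.comp measurable_snd))
        measurable_const
  have hfm : Measurable (fun p : ℝ × ℝ × ℝ =>
      stableHalfDensity L₁ p.1 * stableHalfDensity L₂ p.2.1 * stableHalfDensity L₃ p.2.2 /
        (2 * Real.sqrt (1 - p.1 - p.2.1 - p.2.2))) := by
    apply Measurable.div
    · exact (((stable_meas L₁).comp measurable_fst).mul
        ((stable_meas L₂).comp (measurable_fst.comp measurable_snd))).mul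
        ((stable_meas L₃).comp (measurable_snd.comp measurable_snd))
    · exact measurable_const.mul (Measurable.sqrt (by fun_prop))
  have hFm : Measurable (fun p : ℝ × ℝ × ℝ => ENNReal.ofReal
      (stableHalfDensity L₁ p.1 * stableHalfDensity L₂ p.2.1 * stableHalfDensity L₃ p.2.2 /
        (2 * Real.sqrt (1 - p.1 - p.2.1 - p.2.2)))) := hfm.ennreal_ofReal
  set F : ℝ × ℝ × ℝ → ℝ≥0∞ := fun p => ENNReal.ofReal
      (stableHalfDensity L₁ p.1 * stableHalfDensity L₂ p.2.1 * stableHalfDensity L₃ p.2.2 /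
        (2 * Real.sqrt (1 - p.1 - p.2.1 - p.2.2))) with hFdef
  set Sim : Set (ℝ × ℝ × ℝ) := {p : ℝ × ℝ × ℝ | 0 < p.1 ∧ 0 < p.2.1 ∧ 0 < p.2.2 ∧
      p.1 + p.2.1 + p.2.2 < 1} with hSimdef
  have hG2meas : ∀ a₁ : ℝ, Measurable (fun a₂ : ℝ => ENNReal.ofReal (stableHalfDensity L₂ a₂ *
      (Real.exp (-L₃^2 / (2*(1 - a₁ - a₂))) / (2 * Real.sqrt (1 - a₁ - a₂))))) := by
    intro a₁
    apply Measurable.ennreal_ofReal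
    apply (stable_meas L₂).mul
    apply Measurable.div
    · exact Real.measurable_exp.comp
        (measurable_const.div (measurable_const.mul (measurable_const.sub measurable_id)))
    · exact measurable_const.mul (measurable_const.sub measurable_id).sqrt
  -- innermost integral
  have step3 : ∀ a₁ : ℝ, 0 < a₁ → ∀ a₂ : ℝ, 0 < a₂ →
      (∫⁻ a₃ : ℝ, Sim.indicator F (a₁, (a₂, a₃)))
      = ENNReal.ofReal (stableHalfDensity L₁ a₁) *
        ENNReal.ofReal (stableHalfDensity L₂ a₂ *
          (Real.exp (-L₃^2 / (2*(1 - a₁ - a₂))) / (2 * Real.sqrt (1 - a₁ - a₂)))) := by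
    intro a₁ ha₁ a₂ ha₂
    have hind : ∀ a₃ : ℝ, Sim.indicator F (a₁, (a₂, a₃))
        = (Ioo (0:ℝ) (1 - a₁ - a₂)).indicator (fun b₃ => F (a₁, (a₂, b₃))) a₃ := by
      intro a₃
      by_cases h3 : a₃ ∈ Ioo (0:ℝ) (1 - a₁ - a₂)
      · rw [Set.indicator_of_mem h3, Set.indicator_of_mem]
        exact ⟨ha₁, ha₂, h3.1, by have := h3.2; simp only; linarith⟩
      · rw [Set.indicator_of_notMem h3, Set.indicator_of_notMem]
        intro hc
        obtain ⟨_, _, hc3, hc4⟩ := hc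
        exact h3 ⟨hc3, by simp only at hc4 ⊢; linarith⟩
    rw [lintegral_congr hind, lintegral_indicator measurableSet_Ioo]
    have hpt : ∀ a₃ ∈ Ioo (0:ℝ) (1 - a₁ - a₂), F (a₁, (a₂, a₃))
        = ENNReal.ofReal (stableHalfDensity L₁ a₁ * stableHalfDensity L₂ a₂) *
          ENNReal.ofReal (stableHalfDensity L₃ a₃ *
            (Real.exp (-(0:ℝ)^2 / (2*(1 - a₁ - a₂ - a₃))) /
              (2 * Real.sqrt (1 - a₁ - a₂ - a₃)))) := by
      intro a₃ _
      rw [hFdef]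
      simp only
      rw [← ENNReal.ofReal_mul (mul_nonneg (stable_nonneg _ _ h₁.le) (stable_nonneg _ _ h₂.le))]
      congr 1
      rw [show (-(0:ℝ)^2 / (2*(1 - a₁ - a₂ - a₃))) = 0 by norm_num, Real.exp_zero]
      ring
    rw [setLIntegral_congr_fun measurableSet_Ioo hpt]
    rw [lintegral_const_mul _ (by
      apply Measurable.ennreal_ofReal
      apply (stable_meas L₃).mul
      apply Measurable.div
      · exact Real.measurable_exp.comp
          (measurable_const.div (measurable_const.mul (measurable_const.sub measurable_id)))
      · exact measurable_const.mul (measurable_const.sub measurable_id).sqrt)]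
    rw [LG L₃ 0 (1 - a₁ - a₂) h₃ le_rfl]
    rw [add_zero]
    rw [ENNReal.ofReal_mul (stable_nonneg _ _ h₁.le), mul_assoc,
      ← ENNReal.ofReal_mul (stable_nonneg _ _ h₂.le)]
  -- second level
  have step2 : ∀ a₁ : ℝ, 0 < a₁ →
      (∫⁻ q : ℝ × ℝ, Sim.indicator F (a₁, q))
      = ENNReal.ofReal (stableHalfDensity L₁ a₁ *
          (Real.exp (-(L₂+L₃)^2 / (2*(1 - a₁))) / (2 * Real.sqrt (1 - a₁)))) := by
    intro a₁ ha₁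
    have hqm : Measurable fun q : ℝ × ℝ => Sim.indicator F (a₁, q) :=
      (hFm.indicator hS).comp measurable_prodMk_left
    rw [Measure.volume_eq_prod, lintegral_prod _ hqm.aemeasurable]
    have h2' : ∀ a₂ : ℝ, (∫⁻ a₃ : ℝ, Sim.indicator F (a₁, (a₂, a₃)))
        = (Ioi (0:ℝ)).indicator (fun b₂ => ENNReal.ofReal (stableHalfDensity L₁ a₁) *
            ENNReal.ofReal (stableHalfDensity L₂ b₂ *
              (Real.exp (-L₃^2 / (2*(1 - a₁ - b₂))) / (2 * Real.sqrt (1 - a₁ - b₂))))) a₂ := by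
      intro a₂
      by_cases h₂' : a₂ ∈ Ioi (0:ℝ)
      · rw [Set.indicator_of_mem h₂', step3 a₁ ha₁ a₂ h₂']
      · rw [Set.indicator_of_notMem h₂']
        have hz : ∀ a₃ : ℝ, Sim.indicator F (a₁, (a₂, a₃)) = 0 := by
          intro a₃
          apply Set.indicator_of_notMem
          intro hc
          exact h₂' hc.2.1
        rw [lintegral_congr hz, lintegral_zero]
    rw [lintegral_congr h2', lintegral_indicator measurableSet_Ioi]
    rw [lintegral_const_mul _ (hG2meas a₁)]
    rw [lint_Ioi_eq_Ioo (1 - a₁) _ (fun x hx => vanish_top (by linarith))]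
    rw [LG L₂ L₃ (1 - a₁) h₂ h₃.le]
    rw [← ENNReal.ofReal_mul (stable_nonneg _ _ h₁.le)]
  -- full triple lintegral
  have key : (∫⁻ p in Sim, F p)
      = ENNReal.ofReal (Real.exp (-(L₁+(L₂+L₃))^2 / (2*1)) / (2 * Real.sqrt 1)) := by
    rw [← lintegral_indicator hS, Measure.volume_eq_prod,
      lintegral_prod _ (hFm.indicator hS).aemeasurable]
    have h1' : ∀ a₁ : ℝ, (∫⁻ q : ℝ × ℝ, Sim.indicator F (a₁, q))
        = (Ioi (0:ℝ)).indicator (fun b₁ => ENNReal.ofReal (stableHalfDensity L₁ b₁ *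
            (Real.exp (-(L₂+L₃)^2 / (2*(1 - b₁))) / (2 * Real.sqrt (1 - b₁))))) a₁ := by
      intro a₁
      by_cases h₁' : a₁ ∈ Ioi (0:ℝ)
      · rw [Set.indicator_of_mem h₁', step2 a₁ h₁']
      · rw [Set.indicator_of_notMem h₁']
        have hz : ∀ q : ℝ × ℝ, Sim.indicator F (a₁, q) = 0 := by
          intro q
          apply Set.indicator_of_notMem
          intro hc
          exact h₁' hc.1
        rw [lintegral_congr hz, lintegral_zero]
    rw [lintegral_congr h1', lintegral_indicator measurableSet_Ioi]
    rw [lint_Ioi_eq_Ioo 1 _ (fun x hx => vanish_top (by linarith))]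
    exact LG L₁ (L₂+L₃) 1 h₁ (by positivity)
  -- Part 1 : the triple integral
  have part1 : (∫ p in {p : ℝ × ℝ × ℝ | 0 < p.1 ∧ 0 < p.2.1 ∧ 0 < p.2.2 ∧
        p.1 + p.2.1 + p.2.2 < 1},
        stableHalfDensity L₁ p.1 * stableHalfDensity L₂ p.2.1 * stableHalfDensity L₃ p.2.2 /
          (2 * Real.sqrt (1 - p.1 - p.2.1 - p.2.2)))
      = (1 / 2) * Real.exp (-(L₁ + L₂ + L₃) ^ 2 / 2) := by
    rw [integral_eq_lintegral_of_nonneg_ae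
      (ae_of_all _ fun p => div_nonneg (mul_nonneg (mul_nonneg
        (stable_nonneg _ _ h₁.le) (stable_nonneg _ _ h₂.le)) (stable_nonneg _ _ h₃.le))
        (by positivity))
      hfm.aestronglyMeasurable]
    rw [show (∫⁻ p in {p : ℝ × ℝ × ℝ | 0 < p.1 ∧ 0 < p.2.1 ∧ 0 < p.2.2 ∧
        p.1 + p.2.1 + p.2.2 < 1}, ENNReal.ofReal
        (stableHalfDensity L₁ p.1 * stableHalfDensity L₂ p.2.1 * stableHalfDensity L₃ p.2.2 /
          (2 * Real.sqrt (1 - p.1 - p.2.1 - p.2.2)))) = ∫⁻ p in Sim, F p from rfl]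
    rw [key, ENNReal.toReal_ofReal (by positivity)]
    rw [show (-(L₁+(L₂+L₃))^2 / (2*(1:ℝ))) = (-(L₁ + L₂ + L₃) ^ 2 / 2) by ring, Real.sqrt_one]
    ring
  refine ⟨part1.trans part2.symm, part2, ?_⟩
  rw [integral_div, part1, part2]
  exact div_self (by positivity)
end

section
/- Let γ and γ' be two geodesic rays in a connected simple graph G, and suppose there exists a finite set V₀ of vertices and an integer T such that for all s, t ≥ T, every walk in G from γ(s) to γ'(t) passes through a vertex of V₀ (i.e., γ and γ' eventually lie in different connected components of the graph obtained by removing V₀). Then the function B_γ + B_γ' admits a global minimum over all vertices of G, and this minimum is attained at some vertex v₀ ∈ V₀. -/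
/-- A geodesic ray in a graph `G`: a sequence `γ : ℕ → V` with
`d(γ s, γ t) = |s − t|` for all `s, t`. -/
def IsGeodesicRay {V : Type*} (G : SimpleGraph V) (γ : ℕ → V) : Prop :=
  ∀ s t : ℕ, (G.dist (γ s) (γ t) : ℤ) = |(s : ℤ) - (t : ℤ)|

/-- `B` is the Busemann function of the geodesic ray `γ`: for every vertex `v`,
`B v` is the eventual (limit) value of `d(v, γ t) − t`. -/
def IsBusemannFunction {V : Type*} (G : SimpleGraph V) (γ : ℕ → V) (B : V → ℤ) : Prop :=
  ∀ v : V, ∃ T : ℕ, ∀ t : ℕ, T ≤ t → B v = (G.dist v (γ t) : ℤ) - t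

/-! A shortest walk from `γ s` to `γ' t` must cross `V₀` at some `u`, so `u` lies on a geodesic
between them. Taking `s, t` large enough that the Busemann functions are realised by
`d(·, γ s) - s` and `d(·, γ' t) - t` at `v` and on all of the finite set `V₀`, the triangle
inequality through `v` gives `B u + B' u ≤ B v + B' v`. Hence the minimum of `B + B'` over `V₀`
is a global minimum. -/

open Filter

namespace SimpleGraph

variable {V : Type*} {G : SimpleGraph V} [DecidableEq V]

lemma Walk.dist_add_dist_le_length {u v w : V} (p : G.Walk u v) (hw : w ∈ p.support) :
    G.dist u w + G.dist w v ≤ p.length := by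
  calc G.dist u w + G.dist w v
      ≤ (p.takeUntil w hw).length + (p.dropUntil w hw).length :=
        Nat.add_le_add (dist_le _) (dist_le _)
    _ = p.length := by rw [← Walk.length_append, p.take_spec hw]

lemma Reachable.exists_mem_dist_add_dist_eq {u v : V} (h : G.Reachable u v) {S : Set V}
    (hS : ∀ p : G.Walk u v, ∃ w ∈ S, w ∈ p.support) :
    ∃ w ∈ S, G.dist u w + G.dist w v = G.dist u v := by
  obtain ⟨p, hp⟩ := h.exists_walk_length_eq_dist
  obtain ⟨w, hwS, hw⟩ := hS p
  refine ⟨w, hwS, le_antisymm (hp ▸ p.dist_add_dist_le_length hw) ?_⟩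
  exact (p.takeUntil w hw).reachable.dist_triangle_left v

end SimpleGraph

section Busemann

variable {V : Type*} {G : SimpleGraph V} {γ γ' : ℕ → V} {B B' : V → ℤ}

lemma IsBusemannFunction.eventually_forall_mem (hB : IsBusemannFunction G γ B) (S : Finset V) :
    ∀ᶠ t in atTop, ∀ v ∈ S, B v = (G.dist v (γ t) : ℤ) - t :=
  (eventually_all_finset S).2 fun v _ =>
    let ⟨T, hT⟩ := hB v
    eventually_atTop.2 ⟨T, hT⟩

lemma exists_mem_busemann_add_le_of_separates (hG : G.Connected)
    (hB : IsBusemannFunction G γ B) (hB' : IsBusemannFunction G γ' B') {V₀ : Finset V} {T : ℕ}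
    (hsep : ∀ s t : ℕ, T ≤ s → T ≤ t →
      ∀ p : G.Walk (γ s) (γ' t), ∃ v₀ ∈ V₀, v₀ ∈ p.support) (v : V) :
    ∃ u ∈ V₀, B u + B' u ≤ B v + B' v := by
  classical
  obtain ⟨s, hTs, hs⟩ :=
    ((eventually_ge_atTop T).and (hB.eventually_forall_mem (insert v V₀))).exists
  obtain ⟨t, hTt, ht⟩ :=
    ((eventually_ge_atTop T).and (hB'.eventually_forall_mem (insert v V₀))).exists
  obtain ⟨u, hu, hgeod⟩ :=
    (hG.preconnected (γ s) (γ' t)).exists_mem_dist_add_dist_eq (S := V₀) (hsep s t hTs hTt)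
  have htri : G.dist (γ s) (γ' t) ≤ G.dist (γ s) v + G.dist v (γ' t) := hG.dist_triangle
  refine ⟨u, hu, ?_⟩
  rw [hs u (Finset.mem_insert_of_mem hu), hs v (Finset.mem_insert_self v V₀),
    ht u (Finset.mem_insert_of_mem hu), ht v (Finset.mem_insert_self v V₀),
    G.dist_comm (u := u), G.dist_comm (u := v)]
  omega

end Busemann

theorem busemann_sum_min_attained_general {V : Type*} (G : SimpleGraph V) (hG : G.Connected)
    (γ γ' : ℕ → V)
    (B B' : V → ℤ) (hB : IsBusemannFunction G γ B) (hB' : IsBusemannFunction G γ' B')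
    (V₀ : Finset V) (T : ℕ)
    (hsep : ∀ s t : ℕ, T ≤ s → T ≤ t →
      ∀ p : G.Walk (γ s) (γ' t), ∃ v₀ ∈ V₀, v₀ ∈ p.support) :
    ∃ v₀ ∈ V₀, ∀ v : V, B v₀ + B' v₀ ≤ B v + B' v := by
  have hle := exists_mem_busemann_add_le_of_separates hG hB hB' hsep
  have hne : V₀.Nonempty :=
    let ⟨u, hu, _⟩ := hle (γ 0)
    ⟨u, hu⟩
  obtain ⟨v₀, hv₀, hmin⟩ := V₀.exists_min_image (fun u => B u + B' u) hne
  refine ⟨v₀, hv₀, fun v => ?_⟩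
  obtain ⟨w, hw, hwv⟩ := hle v
  exact (hmin w hw).trans hwv

/-- If two geodesic rays `γ, γ'` eventually lie in different components after removing a
finite vertex set `V₀` (every walk between `γ s` and `γ' t`, for `s, t ≥ T`, meets `V₀`),
then `B_γ + B_{γ'}` admits a global minimum, attained at some vertex of `V₀`. -/
theorem busemann_sum_min_attained {V : Type*} (G : SimpleGraph V) (hG : G.Connected)
    (γ γ' : ℕ → V) (hγ : IsGeodesicRay G γ) (hγ' : IsGeodesicRay G γ')
    (B B' : V → ℤ) (hB : IsBusemannFunction G γ B) (hB' : IsBusemannFunction G γ' B')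
    (V₀ : Finset V) (T : ℕ)
    (hsep : ∀ s t : ℕ, T ≤ s → T ≤ t →
      ∀ p : G.Walk (γ s) (γ' t), ∃ v₀ ∈ V₀, v₀ ∈ p.support) :
    ∃ v₀ ∈ V₀, ∀ v : V, B v₀ + B' v₀ ≤ B v + B' v :=
  busemann_sum_min_attained_general G hG γ γ' B B' hB hB' V₀ T hsep
end

section
/- For every integer k ≥ 1, one has Σ_{m=0}^{∞} (k/(2m+k)) · 2^{−(2m+k)} · binom(2m+k, m) = 1; that is, the hitting probabilities Q_k(n) = (k/n)·2^{−n}·binom(n,(n+k)/2), summed over all n ≥ k with n ≡ k (mod 2), total 1 (the simple random walk hits −k almost surely). -/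
/-!
Write `N = 2M + k`. The reflection principle says that the walk hits `-k` by time `N` with
probability `P(S_N ≤ -k) + P(S_N < -k)`, i.e.
`∑_{m ≤ M} Q_k(2m+k) = 2^{-N} (∑_{j<M} C(N,j) + ∑_{j≤M} C(N,j))`.
This is proved by induction on `M`, from Pascal's rule for partial row sums and the ballot
identity `k C(N+2, M+1) = (N+2) (C(N+1, M+1) - C(N+1, M))`. By the symmetry of the row, the
defect from `1` is the middle window `2^{-N} ∑_{i<k} C(N, M+i) ≤ k 2^k C(2n,n) / 4^n` with
`n = M + k`, which tends to `0` because `(2n+1) C(2n,n)^2 ≤ 16^n`.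
-/

open Finset Filter Topology

namespace Nat

theorem sum_range_succ_choose_succ (n a : ℕ) :
    ∑ j ∈ range (a + 1), (n + 1).choose j
      = ∑ j ∈ range a, n.choose j + ∑ j ∈ range (a + 1), n.choose j := by
  simp only [sum_range_succ' _ a, choose_succ_succ, sum_add_distrib, choose_zero_right]
  ring

theorem sum_range_choose_add_sum_range_choose {n a b : ℕ} (h : a + b = n + 1) :
    ∑ j ∈ range a, n.choose j + ∑ j ∈ range b, n.choose j = 2 ^ n := by
  have hupper : ∑ i ∈ range b, n.choose (a + i) = ∑ j ∈ range b, n.choose j := by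
    rw [← sum_range_reflect]
    exact sum_congr rfl fun i hi => choose_symm_of_eq_add (by grind)
  rw [← hupper, ← sum_range_add, h, sum_range_choose]

theorem add_one_mul_choose_succ_sub_choose (n j : ℕ) :
    ((n : ℝ) + 1) * ((n.choose (j + 1) : ℝ) - n.choose j)
      = ((n : ℝ) - 2 * j - 1) * (n + 1).choose (j + 1) := by
  have h₁ : ((n : ℝ) + 1) * n.choose j = (n + 1).choose (j + 1) * (j + 1) := by
    exact_mod_cast add_one_mul_choose_eq n j
  have h₂ : ((n + 1).choose (j + 1) : ℝ) = n.choose j + n.choose (j + 1) := by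
    exact_mod_cast choose_succ_succ n j
  linear_combination (-2) * h₁ - (n + 1 : ℝ) * h₂

theorem two_mul_add_one_mul_centralBinom_sq_le (n : ℕ) :
    (2 * n + 1) * centralBinom n ^ 2 ≤ 16 ^ n := by
  induction n with
  | zero => simp
  | succ n ih =>
    have h := succ_mul_centralBinom_succ n
    have hsq : (n + 1) ^ 2 * ((2 * (n + 1) + 1) * centralBinom (n + 1) ^ 2)
        = 4 * (2 * n + 3) * (2 * n + 1) * ((2 * n + 1) * centralBinom n ^ 2) := by
      rw [show (n + 1) ^ 2 * ((2 * (n + 1) + 1) * centralBinom (n + 1) ^ 2)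
        = (2 * n + 3) * ((n + 1) * centralBinom (n + 1)) ^ 2 by ring, h]
      ring
    refine le_of_mul_le_mul_left (a := (n + 1) ^ 2) ?_ (by positivity)
    calc (n + 1) ^ 2 * ((2 * (n + 1) + 1) * centralBinom (n + 1) ^ 2)
        ≤ 4 * (2 * n + 3) * (2 * n + 1) * 16 ^ n := hsq ▸ Nat.mul_le_mul_left _ ih
      _ ≤ (n + 1) ^ 2 * 16 * 16 ^ n := Nat.mul_le_mul_right _ (by nlinarith)
      _ = (n + 1) ^ 2 * 16 ^ (n + 1) := by ring

end Nat

theorem tendsto_centralBinom_div_four_pow :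
    Tendsto (fun n : ℕ => (n.centralBinom : ℝ) / 4 ^ n) atTop (𝓝 0) := by
  have hsq (n : ℕ) : ((n.centralBinom : ℝ) / 4 ^ n) ^ 2 ≤ 1 / ((n : ℝ) + 1) := by
    have h : ((2 * n + 1 : ℕ) : ℝ) * n.centralBinom ^ 2 ≤ (16 : ℕ) ^ n := by
      exact_mod_cast n.two_mul_add_one_mul_centralBinom_sq_le
    have h16 : ((4 : ℝ) ^ n) ^ 2 = 16 ^ n := by rw [← pow_mul, mul_comm, pow_mul]; norm_num
    rw [div_pow, h16, div_le_div_iff₀ (by positivity) (by positivity)]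
    push_cast at h
    nlinarith [sq_nonneg (n.centralBinom : ℝ)]
  have hbound (n : ℕ) : (n.centralBinom : ℝ) / 4 ^ n ≤ √(1 / ((n : ℝ) + 1)) :=
    Real.le_sqrt_of_sq_le (hsq n)
  have hlim := tendsto_one_div_add_atTop_nhds_zero_nat.sqrt
  rw [Real.sqrt_zero] at hlim
  exact squeeze_zero (fun n => by positivity) hbound hlim

-- `firstHitProb k m` is `Q_k(2m+k)`.
noncomputable def firstHitProb (k m : ℕ) : ℝ :=
  ((k : ℝ) / (2 * m + k)) * (Nat.choose (2 * m + k) m : ℝ) / 2 ^ (2 * m + k)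

theorem firstHitProb_nonneg (k m : ℕ) : 0 ≤ firstHitProb k m := by
  unfold firstHitProb; positivity

theorem firstHitProb_succ (k m : ℕ) :
    firstHitProb k (m + 1)
      = (((2 * m + k + 1).choose (m + 1) : ℝ) - (2 * m + k + 1).choose m)
        / 2 ^ (2 * (m + 1) + k) := by
  have h := Nat.add_one_mul_choose_succ_sub_choose (2 * m + k + 1) m
  rw [firstHitProb]
  congr 1
  rw [show 2 * (m + 1) + k = 2 * m + k + 1 + 1 by ring, div_mul_eq_mul_div,
    div_eq_iff (by positivity)]
  push_cast at h ⊢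
  linear_combination -h

theorem sum_range_firstHitProb {k : ℕ} (hk : k ≠ 0) (M : ℕ) :
    ∑ m ∈ range (M + 1), firstHitProb k m
      = ((∑ j ∈ range M, (2 * M + k).choose j : ℕ)
          + (∑ j ∈ range (M + 1), (2 * M + k).choose j : ℕ) : ℝ) / 2 ^ (2 * M + k) := by
  induction M with
  | zero =>
    simp [firstHitProb, hk]
  | succ M ih =>
    set N := 2 * M + k
    have hA := Nat.sum_range_succ_choose_succ (N + 1) M
    have hB := Nat.sum_range_succ_choose_succ (N + 1) (M + 1)
    have hC := Nat.sum_range_succ_choose_succ N M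
    have hD := sum_range_succ (fun j => (N + 1).choose j) M
    have hE := sum_range_succ (fun j => (N + 1).choose j) (M + 1)
    have key : ((∑ j ∈ range (M + 1), (N + 1 + 1).choose j
        + ∑ j ∈ range (M + 1 + 1), (N + 1 + 1).choose j : ℕ) : ℝ) + (N + 1).choose M
        = 4 * ((∑ j ∈ range M, N.choose j : ℕ) + (∑ j ∈ range (M + 1), N.choose j : ℕ))
          + (N + 1).choose (M + 1) := by
      norm_cast
      omega
    rw [sum_range_succ, ih, firstHitProb_succ, show 2 * (M + 1) + k = N + 1 + 1 by ring, pow_succ,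
      pow_succ]
    field_simp
    push_cast at key ⊢
    linear_combination -key

theorem one_sub_sum_range_firstHitProb {k : ℕ} (hk : k ≠ 0) (M : ℕ) :
    1 - ∑ m ∈ range (M + 1), firstHitProb k m
      = (∑ i ∈ range k, (2 * M + k).choose (M + i) : ℕ) / 2 ^ (2 * M + k) := by
  have hsplit := sum_range_add (fun j => (2 * M + k).choose j) M k
  have hcompl := Nat.sum_range_choose_add_sum_range_choose
    (n := 2 * M + k) (a := M + k) (b := M + 1) (by ring)
  have htotal : ((∑ j ∈ range M, (2 * M + k).choose j : ℕ) : ℝ)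
      + (∑ j ∈ range (M + 1), (2 * M + k).choose j : ℕ)
      + (∑ i ∈ range k, (2 * M + k).choose (M + i) : ℕ) = 2 ^ (2 * M + k) := by
    exact_mod_cast (by omega : _ = 2 ^ (2 * M + k))
  rw [sum_range_firstHitProb hk, eq_div_iff (by positivity), sub_mul, one_mul,
    div_mul_cancel₀ _ (by positivity)]
  linarith

theorem sum_choose_middle_div_two_pow_le (k M : ℕ) :
    ((∑ i ∈ range k, (2 * M + k).choose (M + i) : ℕ) : ℝ) / 2 ^ (2 * M + k)
      ≤ k * 2 ^ k * ((M + k).centralBinom / 4 ^ (M + k)) := by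
  have hterm (i : ℕ) : (2 * M + k).choose (M + i) ≤ (M + k).centralBinom :=
    (Nat.choose_le_choose _ (by omega)).trans (Nat.choose_le_centralBinom _ _)
  have hsum : ((∑ i ∈ range k, (2 * M + k).choose (M + i) : ℕ) : ℝ)
      ≤ k * (M + k).centralBinom := by
    exact_mod_cast (sum_le_sum fun i _ => hterm i).trans_eq (by simp)
  have hpow : (4 : ℝ) ^ (M + k) = 2 ^ (2 * M + k) * 2 ^ k := by
    rw [show (4 : ℝ) = 2 ^ 2 by norm_num, ← pow_mul, ← pow_add]
    ring_nf
  rw [hpow, div_le_iff₀ (by positivity)]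
  field_simp
  exact hsum

theorem tendsto_sum_choose_middle_div_two_pow (k : ℕ) :
    Tendsto (fun M : ℕ =>
        ((∑ i ∈ range k, (2 * M + k).choose (M + i) : ℕ) : ℝ) / 2 ^ (2 * M + k))
      atTop (𝓝 0) := by
  have hlim := (tendsto_centralBinom_div_four_pow.comp (tendsto_add_atTop_nat k)).const_mul
    ((k : ℝ) * 2 ^ k)
  rw [mul_zero] at hlim
  exact squeeze_zero (fun M => by positivity) (sum_choose_middle_div_two_pow_le k) hlim

/-- For every integer `k ≥ 1`,
`Σ_{m=0}^∞ (k/(2m+k)) · 2^{−(2m+k)} · C(2m+k, m) = 1`: the simple random walk hits `−k`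
almost surely. -/
theorem first_hit_prob_total_one (k : ℕ) (hk : 1 ≤ k) :
    ∑' m : ℕ, ((k : ℝ) / (2 * m + k)) * (Nat.choose (2 * m + k) m : ℝ) / 2 ^ (2 * m + k)
      = 1 := by
  change ∑' m, firstHitProb k m = 1
  have hk₀ : k ≠ 0 := by omega
  have hpartial : Tendsto (fun M => ∑ m ∈ range (M + 1), firstHitProb k m) atTop (𝓝 1) := by
    have h := (tendsto_sum_choose_middle_div_two_pow k).const_sub 1
    rw [sub_zero] at h
    refine h.congr fun M => ?_
    rw [← one_sub_sum_range_firstHitProb hk₀, sub_sub_cancel]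
  exact ((hasSum_iff_tendsto_nat_of_nonneg (firstHitProb_nonneg k) 1).2
    ((tendsto_add_atTop_iff_nat 1).1 hpartial)).tsum_eq
end
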